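/- arXiv:1710.04388 — 9 statements merged into one kernel-verified Lean document; each statement's English description precedes it below -/
import Mathlib

section
/- Let k ≥ 2 be an integer. Then there exist pairwise distinct nonzero integers c_1, …, c_k with −k^{k−1} ≤ c_i ≤ k^{k−1} for all i and c_1 + … + c_k = 0, such that for every prime p > (k+1)·k^{k−1} the following holds: if l_1, …, l_k are nonnegative integers with l_1·c_1 + … + l_k·c_k ≡ 0 (mod p), then either l_1 = … = l_k = 0, or l_1 = … = l_k = 1, or l_1 + … + l_k > k. -/
/-!
Take `c = (1, k, …, k ^ (k - 2), -(1 + k + ⋯ + k ^ (k - 2)))`. If `∑ lᵢ ≤ k`, then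
`|∑ lᵢ cᵢ| ≤ k · k ^ (k - 1) < p`, so the congruence is the equality
`∑_{i < k - 1} lᵢ kⁱ = l_{k-1} (1 + k + ⋯ + k ^ (k - 2))`. Unless `l_{k-1} = 0` (when every
term vanishes), both sides are base-`k` expansions with digits below `k`, so every `lᵢ` equals
`l_{k-1}`; then `k · l_{k-1} = ∑ lᵢ ≤ k` leaves only the values `0` and `1`.
-/

open Finset

theorem eq_of_sum_mul_pow_eq {b n : ℕ} {d e : Fin n → ℕ} (hd : ∀ i, d i < b) (he : ∀ i, e i < b)
    (h : ∑ i, d i * b ^ (i : ℕ) = ∑ i, e i * b ^ (i : ℕ)) : d = e := by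
  have := finFunctionFinEquiv.injective (a₁ := fun i => ⟨d i, hd i⟩) (a₂ := fun i => ⟨e i, he i⟩)
    (Fin.ext (by simpa only [finFunctionFinEquiv_apply] using h))
  funext i
  exact congrArg (fun f : Fin n → Fin b => (f i : ℕ)) this

theorem abs_sum_mul_le {ι : Type*} (s : Finset ι) (l : ι → ℕ) (c : ι → ℤ) {B : ℤ}
    (hc : ∀ i ∈ s, |c i| ≤ B) : |∑ i ∈ s, (l i : ℤ) * c i| ≤ (∑ i ∈ s, l i : ℕ) * B := by
  calc |∑ i ∈ s, (l i : ℤ) * c i| ≤ ∑ i ∈ s, |(l i : ℤ) * c i| := abs_sum_le_sum_abs _ _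
    _ ≤ ∑ i ∈ s, (l i : ℤ) * B := by
      gcongr with i hi
      rw [abs_mul, Nat.abs_cast]
      exact mul_le_mul_of_nonneg_left (hc i hi) (Nat.cast_nonneg _)
    _ = (∑ i ∈ s, l i : ℕ) * B := by push_cast; rw [sum_mul]

theorem one_le_geomSum {b n : ℕ} (hn : n ≠ 0) : 1 ≤ ∑ i ∈ range n, b ^ i :=
  single_le_sum (f := (b ^ ·)) (fun _ _ => Nat.zero_le _) (mem_range.2 (Nat.pos_of_ne_zero hn))

def geomWeights (b n : ℕ) : Fin (n + 1) → ℤ :=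
  Fin.snoc (fun i : Fin n => (b : ℤ) ^ (i : ℕ)) (-((∑ i ∈ range n, b ^ i : ℕ) : ℤ))

namespace geomWeights

variable {b n : ℕ}

@[simp]
theorem castSucc (i : Fin n) : geomWeights b n i.castSucc = (b : ℤ) ^ (i : ℕ) :=
  Fin.snoc_castSucc ..

@[simp]
theorem last : geomWeights b n (Fin.last n) = -((∑ i ∈ range n, b ^ i : ℕ) : ℤ) :=
  Fin.snoc_last ..

theorem sum_eq_zero : ∑ i, geomWeights b n i = 0 := by
  rw [Fin.sum_univ_castSucc]
  simp [Fin.sum_univ_eq_sum_range (fun i => (b : ℤ) ^ i)]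

theorem ne_zero (hb : b ≠ 0) (hn : n ≠ 0) (i : Fin (n + 1)) : geomWeights b n i ≠ 0 := by
  induction i using Fin.lastCases with
  | last => simpa only [last, neg_ne_zero, Nat.cast_ne_zero] using Nat.one_le_iff_ne_zero.mp (one_le_geomSum hn)
  | cast i => simp [hb]

theorem injective (hb : 2 ≤ b) (hn : n ≠ 0) : Function.Injective (geomWeights b n) := by
  have hS : (0 : ℤ) < (∑ i ∈ range n, b ^ i : ℕ) := by exact_mod_cast one_le_geomSum hn
  have hpow (i : ℕ) : (0 : ℤ) < (b : ℤ) ^ i := by positivity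
  intro i j hij
  induction i using Fin.lastCases <;> induction j using Fin.lastCases
  · rfl
  all_goals simp only [last, castSucc] at hij
  · linarith [hpow ‹Fin n›]
  · linarith [hpow ‹Fin n›]
  · exact congrArg _ (Fin.ext (Nat.pow_right_injective hb (by exact_mod_cast hij)))

theorem abs_le (hb : 2 ≤ b) (i : Fin (n + 1)) : |geomWeights b n i| ≤ (b : ℤ) ^ n := by
  induction i using Fin.lastCases with
  | last =>
    rw [last, abs_neg, Nat.abs_cast]
    exact_mod_cast (Nat.geomSum_lt hb fun i hi => mem_range.1 hi).le
  | cast i =>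
    rw [castSucc, abs_pow, Nat.abs_cast]
    exact pow_le_pow_right₀ (by exact_mod_cast (by omega : 1 ≤ b)) i.is_lt.le

theorem eq_last_of_sum_mul_eq_zero (hb : 2 ≤ b) (hn : n ≠ 0) {l : Fin (n + 1) → ℕ}
    (hl : ∑ i, l i ≤ b) (h : ∑ i, (l i : ℤ) * geomWeights b n i = 0) :
    ∀ i, l i = l (Fin.last n) := by
  rw [Fin.sum_univ_castSucc] at h
  simp only [castSucc, last] at h
  set m := l (Fin.last n)
  have hsum : ∑ i, l i = ∑ i : Fin n, l i.castSucc + m := Fin.sum_univ_castSucc l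
  have hdigits : ∑ i : Fin n, l i.castSucc * b ^ (i : ℕ) = ∑ i : Fin n, m * b ^ (i : ℕ) := by
    rw [← mul_sum, Fin.sum_univ_eq_sum_range (b ^ ·)]
    have : ((∑ i : Fin n, l i.castSucc * b ^ (i : ℕ) : ℕ) : ℤ) =
        m * (∑ i ∈ range n, b ^ i : ℕ) := by
      push_cast at h ⊢
      linarith
    exact_mod_cast this
  suffices (fun i : Fin n => l i.castSucc) = fun _ => m by
    intro i
    induction i using Fin.lastCases with
    | last => rfl
    | cast i => exact congrFun this i
  rcases Nat.eq_zero_or_pos m with hm | hm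
  · funext i
    simp only [hm, zero_mul, sum_const_zero, sum_eq_zero_iff, mem_univ, true_implies,
      mul_eq_zero, pow_eq_zero_iff', ne_eq] at hdigits
    have := hdigits i
    omega
  · have hd (i : Fin n) : l i.castSucc ≤ ∑ j : Fin n, l j.castSucc :=
      single_le_sum (f := fun j : Fin n => l j.castSucc) (fun _ _ => Nat.zero_le _) (mem_univ i)
    have hmb : m < b := by
      by_contra! hbm
      have hd0 : ∑ i : Fin n, l i.castSucc * b ^ (i : ℕ) = 0 :=
        Finset.sum_eq_zero fun i _ => mul_eq_zero_of_left (by have := hd i; omega) _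
      have hpos : 0 < ∑ i : Fin n, m * b ^ (i : ℕ) :=
        sum_pos (fun i _ => by positivity) ⟨⟨0, by omega⟩, mem_univ _⟩
      omega
    exact eq_of_sum_mul_pow_eq (fun i => by have := hd i; omega) (fun _ => hmb) hdigits

end geomWeights

/-- For every integer `k ≥ 2` there exist pairwise distinct nonzero integers
`c 1, …, c k` in `[-k^(k-1), k^(k-1)]` summing to `0` such that for every prime
`p > (k+1)·k^(k-1)`, any nonnegative integers `l 1, …, l k` with
`∑ l i · c i ≡ 0 (mod p)` satisfy `l 1 = … = l k = 0`, or `l 1 = … = l k = 1`,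
or `∑ l i > k`. -/
theorem stmt0 (k : ℕ) (hk : 2 ≤ k) :
    ∃ c : Fin k → ℤ, Function.Injective c ∧ (∀ i, c i ≠ 0) ∧
      (∀ i, -((k : ℤ) ^ (k - 1)) ≤ c i ∧ c i ≤ (k : ℤ) ^ (k - 1)) ∧
      (∑ i, c i) = 0 ∧
      ∀ p : ℕ, p.Prime → ((k : ℤ) + 1) * (k : ℤ) ^ (k - 1) < (p : ℤ) →
        ∀ l : Fin k → ℕ, (p : ℤ) ∣ (∑ i, (l i : ℤ) * c i) →
          (∀ i, l i = 0) ∨ (∀ i, l i = 1) ∨ k < ∑ i, l i := by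
  obtain ⟨n, rfl⟩ : ∃ n, k = n + 1 := ⟨k - 1, by omega⟩
  have hn : n ≠ 0 := by omega
  have hb : 2 ≤ n + 1 := hk
  rw [Nat.add_sub_cancel]
  refine ⟨geomWeights (n + 1) n, geomWeights.injective hb hn, geomWeights.ne_zero (by omega) hn,
    fun i => abs_le.mp (geomWeights.abs_le hb i), geomWeights.sum_eq_zero, ?_⟩
  intro p _ hp l hdvd
  rcases lt_or_ge (n + 1) (∑ i, l i) with hl | hl
  · exact Or.inr (Or.inr hl)
  have hzero : ∑ i, (l i : ℤ) * geomWeights (n + 1) n i = 0 := by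
    refine Int.eq_zero_of_abs_lt_dvd hdvd ?_
    calc _ ≤ ((∑ i, l i : ℕ) : ℤ) * ((n + 1 : ℕ) : ℤ) ^ n :=
          abs_sum_mul_le _ _ _ fun i _ => geomWeights.abs_le hb i
      _ ≤ ((n + 1 : ℕ) : ℤ) * ((n + 1 : ℕ) : ℤ) ^ n := by gcongr
      _ < (((n + 1 : ℕ) : ℤ) + 1) * ((n + 1 : ℕ) : ℤ) ^ n := by gcongr; omega
      _ < p := hp
  have hconst := geomWeights.eq_last_of_sum_mul_eq_zero hb hn hl hzero
  have hm : (n + 1) * l (Fin.last n) ≤ (n + 1) * 1 := by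
    simpa only [Fintype.sum_congr _ _ hconst, sum_const, card_univ, Fintype.card_fin,
      smul_eq_mul, mul_one] using hl
  rcases Nat.le_one_iff_eq_zero_or_eq_one.mp (Nat.le_of_mul_le_mul_left hm n.succ_pos)
    with h0 | h1
  · exact Or.inl fun i => (hconst i).trans h0
  · exact Or.inr (Or.inl fun i => (hconst i).trans h1)
end

section
/- Let k ≥ 2 be an integer, and define c_i = k^{i−1} for 1 ≤ i ≤ k−1 and c_k = −∑_{i=1}^{k−1} k^{i−1}. Then c_1, …, c_k are pairwise distinct nonzero integers, −k^{k−1} ≤ c_i ≤ k^{k−1} for all i, c_1 + … + c_k = 0, and for every prime p > (k+1)·k^{k−1} and all nonnegative integers l_1, …, l_k with l_1·c_1 + … + l_k·c_k ≡ 0 (mod p), either l_1 = … = l_k = 0, or l_1 = … = l_k = 1, or l_1 + … + l_k > k. -/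
lemma digits_unique (k : ℕ) (hk : 2 ≤ k) : ∀ (n : ℕ) (a b : ℕ → ℕ),
    (∀ i, i < n → a i < k) → (∀ i, i < n → b i < k) →
    (∑ i ∈ Finset.range n, a i * k ^ i) = (∑ i ∈ Finset.range n, b i * k ^ i) →
    ∀ i, i < n → a i = b i := by
  intro n
  induction n with
  | zero => intro a b _ _ _ i hi; omega
  | succ n ih =>
    intro a b ha hb heq i hi
    rw [Finset.sum_range_succ', Finset.sum_range_succ'] at heq
    have h1 : ∀ j, a (j+1) * k ^ (j+1) = (a (j+1) * k ^ j) * k := by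
      intro j; ring
    have h2 : ∀ j, b (j+1) * k ^ (j+1) = (b (j+1) * k ^ j) * k := by
      intro j; ring
    simp only [h1, h2, ← Finset.sum_mul] at heq
    set A := ∑ j ∈ Finset.range n, a (j+1) * k ^ j
    set B := ∑ j ∈ Finset.range n, b (j+1) * k ^ j
    have ha0 : a 0 < k := ha 0 (by omega)
    have hb0 : b 0 < k := hb 0 (by omega)
    simp only [pow_zero, mul_one] at heq
    have hmod : a 0 = b 0 := by
      have h := congrArg (· % k) heq
      simpa [add_comm, Nat.add_mul_mod_self_right, Nat.mod_eq_of_lt ha0,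
        Nat.mod_eq_of_lt hb0] using h
    have hAB : A = B := by
      have hk0 : 0 < k := by omega
      have : A * k = B * k := by omega
      exact Nat.eq_of_mul_eq_mul_right hk0 this
    rcases Nat.eq_zero_or_pos i with rfl | hpos
    · exact hmod
    · obtain ⟨j, rfl⟩ : ∃ j, i = j + 1 := ⟨i - 1, by omega⟩
      exact ih (fun j => a (j+1)) (fun j => b (j+1))
        (fun m hm => ha (m+1) (by omega)) (fun m hm => hb (m+1) (by omega))
        hAB j (by omega)

/-- For `k ≥ 2` and the explicit integers `c i = k^i` for `i + 1 < k`
(indexing from `0`) and `c (k-1) = -∑_{j<k-1} k^j`, the `c i` are pairwise distinct,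
nonzero, lie in `[-k^(k-1), k^(k-1)]`, sum to `0`, and for every prime
`p > (k+1)·k^(k-1)` and nonnegative integers `l i` with `∑ l i · c i ≡ 0 (mod p)`,
either all `l i = 0`, or all `l i = 1`, or `∑ l i > k`. -/
theorem stmt1 (k : ℕ) (hk : 2 ≤ k) (c : Fin k → ℤ)
    (hc : ∀ i : Fin k, c i =
      if (i : ℕ) + 1 < k then (k : ℤ) ^ (i : ℕ)
      else -(∑ j ∈ Finset.range (k - 1), (k : ℤ) ^ j)) :
    Function.Injective c ∧ (∀ i, c i ≠ 0) ∧
    (∀ i, -((k : ℤ) ^ (k - 1)) ≤ c i ∧ c i ≤ (k : ℤ) ^ (k - 1)) ∧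
    (∑ i, c i) = 0 ∧
    ∀ p : ℕ, p.Prime → ((k : ℤ) + 1) * (k : ℤ) ^ (k - 1) < (p : ℤ) →
      ∀ l : Fin k → ℕ, (p : ℤ) ∣ (∑ i, (l i : ℤ) * c i) →
        (∀ i, l i = 0) ∨ (∀ i, l i = 1) ∨ k < ∑ i, l i := by
  obtain ⟨n, rfl⟩ : ∃ n, k = n + 1 := ⟨k - 1, by omega⟩
  have hn : 1 ≤ n := by omega
  simp only [Nat.add_sub_cancel] at hc ⊢
  have hK1 : (1 : ℤ) ≤ ((n+1:ℕ) : ℤ) := by exact_mod_cast Nat.le_add_left 1 n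
  have hK2 : (2 : ℤ) ≤ ((n+1:ℕ) : ℤ) := by exact_mod_cast (by omega : 2 ≤ n + 1)
  have hKpos : (0:ℤ) < ((n+1:ℕ):ℤ) := by linarith
  have hpowpos : ∀ j : ℕ, (0:ℤ) < ((n+1:ℕ):ℤ) ^ j := fun j => pow_pos hKpos j
  set G : ℤ := ∑ j ∈ Finset.range n, ((n+1:ℕ):ℤ) ^ j with hGdef
  have hGpos : 0 < G := by
    rw [hGdef]
    exact Finset.sum_pos (fun j _ => hpowpos j) ⟨0, Finset.mem_range.mpr hn⟩
  have hGle : G ≤ ((n+1:ℕ):ℤ) ^ n := by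
    have h := geom_sum_mul ((n+1:ℕ):ℤ) n
    rw [← hGdef] at h
    nlinarith [hGpos, hK2]
  have hci : ∀ i : Fin (n+1), (i:ℕ) < n → c i = ((n+1:ℕ):ℤ) ^ (i:ℕ) := by
    intro i hi; rw [hc i, if_pos (by omega)]
  have hlast : ∀ i : Fin (n+1), ¬((i:ℕ) < n) → c i = -G := by
    intro i hi; rw [hc i, if_neg (by omega)]
  have hpow_inj : ∀ a b : ℕ, ((n+1:ℕ):ℤ)^a = ((n+1:ℕ):ℤ)^b → a = b := by
    intro a b hab
    have : (n+1)^a = (n+1)^b := by exact_mod_cast hab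
    exact Nat.pow_right_injective (by omega) this
  have hinj : Function.Injective c := by
    intro i j hij
    by_cases hi : (i:ℕ) < n <;> by_cases hj : (j:ℕ) < n
    · rw [hci i hi, hci j hj] at hij
      exact Fin.ext (hpow_inj _ _ hij)
    · rw [hci i hi, hlast j hj] at hij
      exact absurd hij (by have := hpowpos (i:ℕ); linarith)
    · rw [hlast i hi, hci j hj] at hij
      exact absurd hij (by have := hpowpos (j:ℕ); linarith)
    · have h1 := i.isLt
      have h2 := j.isLt
      exact Fin.ext (by omega)
  have hne : ∀ i, c i ≠ 0 := by
    intro i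
    by_cases hi : (i:ℕ) < n
    · rw [hci i hi]; exact (hpowpos _).ne'
    · rw [hlast i hi]; intro h; linarith [hGpos, neg_eq_zero.mp h]
  have hbd : ∀ i, -((n+1:ℕ):ℤ)^n ≤ c i ∧ c i ≤ ((n+1:ℕ):ℤ)^n := by
    intro i
    by_cases hi : (i:ℕ) < n
    · rw [hci i hi]
      refine ⟨by nlinarith [hpowpos (i:ℕ), hpowpos n], ?_⟩
      exact pow_le_pow_right₀ hK1 (by omega)
    · rw [hlast i hi]
      exact ⟨by linarith, by linarith⟩
  have hLcastval : ∀ i : Fin n, ((i.castSucc : Fin (n+1)) : ℕ) = (i : ℕ) := fun i => rfl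
  have hsum0 : (∑ i, c i) = 0 := by
    rw [Fin.sum_univ_castSucc]
    have e1 : ∀ i : Fin n, c i.castSucc = ((n+1:ℕ):ℤ) ^ (i:ℕ) := by
      intro i
      rw [hci i.castSucc (by rw [hLcastval]; exact i.isLt), hLcastval]
    rw [Finset.sum_congr rfl (fun i _ => e1 i), hlast (Fin.last n) (by simp),
      Fin.sum_univ_eq_sum_range (fun j => ((n+1:ℕ):ℤ) ^ j) n, ← hGdef]
    ring
  refine ⟨hinj, hne, hbd, hsum0, ?_⟩
  intro p hp hplt l hdvd
  by_cases hbig : n + 1 < ∑ i, l i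
  · exact Or.inr (Or.inr hbig)
  push_neg at hbig
  have habs : |∑ i, (l i : ℤ) * c i| < (p : ℤ) := by
    calc |∑ i, (l i:ℤ) * c i| ≤ ∑ i, |(l i:ℤ) * c i| := Finset.abs_sum_le_sum_abs _ _
    _ = ∑ i, (l i:ℤ) * |c i| := by
        refine Finset.sum_congr rfl fun i _ => ?_
        rw [abs_mul, Nat.abs_cast]
    _ ≤ ∑ i, (l i:ℤ) * ((n+1:ℕ):ℤ)^n := by
        refine Finset.sum_le_sum fun i _ => ?_
        exact mul_le_mul_of_nonneg_left (abs_le.mpr (hbd i)) (Nat.cast_nonneg _)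
    _ = ((∑ i, l i : ℕ):ℤ) * ((n+1:ℕ):ℤ)^n := by
        push_cast [Finset.sum_mul]
        rfl
    _ ≤ ((n+1:ℕ):ℤ) * ((n+1:ℕ):ℤ)^n := by
        exact mul_le_mul_of_nonneg_right (by exact_mod_cast hbig) (le_of_lt (hpowpos n))
    _ < (p:ℤ) := by nlinarith [hpowpos n, hplt]
  have hS0 : ∑ i, (l i:ℤ) * c i = 0 := Int.eq_zero_of_abs_lt_dvd hdvd habs
  set m := l (Fin.last n) with hm
  set L : ℕ → ℕ := fun j => if h : j < n + 1 then l ⟨j, h⟩ else 0 with hL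
  have hLval : ∀ i : Fin (n+1), L (i:ℕ) = l i := by
    intro i
    simp only [hL]
    rw [dif_pos i.isLt]
  have hLcast : ∀ i : Fin n, L (i : ℕ) = l i.castSucc := by
    intro i
    have := hLval i.castSucc
    rwa [hLcastval] at this
  have hsplitZ : (∑ i : Fin n, (L (i:ℕ) : ℤ) * ((n+1:ℕ):ℤ)^(i:ℕ)) = (m:ℤ) * G := by
    have h := hS0
    rw [Fin.sum_univ_castSucc] at h
    have e1 : ∀ i : Fin n, (l i.castSucc : ℤ) * c i.castSucc
        = (L (i:ℕ):ℤ) * ((n+1:ℕ):ℤ)^(i:ℕ) := by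
      intro i
      rw [hLcast i, hci i.castSucc (by rw [hLcastval]; exact i.isLt), hLcastval]
    rw [Finset.sum_congr rfl (fun i _ => e1 i), hlast (Fin.last n) (by simp)] at h
    rw [hm]
    linarith
  have hkey : (∑ j ∈ Finset.range n, L j * (n+1)^j)
      = m * ∑ j ∈ Finset.range n, (n+1)^j := by
    have hkeyZ : ((∑ j ∈ Finset.range n, L j * (n+1)^j : ℕ) : ℤ)
        = ((m * ∑ j ∈ Finset.range n, (n+1)^j : ℕ) : ℤ) := by
      rw [hGdef] at hsplitZ
      push_cast at hsplitZ ⊢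
      rw [← Fin.sum_univ_eq_sum_range (fun j => ((L j:ℤ)) * ((n:ℤ)+1)^j) n,
        ← Fin.sum_univ_eq_sum_range (fun j => ((n:ℤ)+1)^j) n]
      rw [← Fin.sum_univ_eq_sum_range (fun j => ((n:ℤ)+1)^j) n] at hsplitZ
      exact hsplitZ
    exact_mod_cast hkeyZ
  set Gn := ∑ j ∈ Finset.range n, (n+1)^j with hGn
  have hGn1 : 1 ≤ Gn := by
    rw [hGn]
    calc 1 = (n+1)^0 := by norm_num
    _ ≤ ∑ j ∈ Finset.range n, (n+1)^j :=
        Finset.single_le_sum (fun i _ => Nat.zero_le _) (Finset.mem_range.mpr hn)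
  set t := ∑ j ∈ Finset.range n, L j with htdef
  have hsplit : ∑ i, l i = t + m := by
    rw [Fin.sum_univ_castSucc]
    congr 1
    rw [htdef, ← Fin.sum_univ_eq_sum_range L n]
    exact Finset.sum_congr rfl (fun i _ => (hLcast i).symm)
  have htm : t + m ≤ n + 1 := by omega
  have hdvdt : n ∣ t := by
    have hc2 := congrArg (Nat.cast : ℕ → ZMod n) hkey
    rw [hGn] at hc2
    push_cast at hc2
    simp only [ZMod.natCast_self, zero_add, one_pow, mul_one, Finset.sum_const,
      Finset.card_range, nsmul_eq_mul, mul_zero] at hc2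
    have hz : ((t : ZMod n)) = 0 := by rw [htdef]; push_cast; exact hc2
    exact (ZMod.natCast_eq_zero_iff t n).mp hz
  rcases Nat.eq_zero_or_pos m with hm0 | hm1
  · left
    have hz : ∀ j ∈ Finset.range n, L j * (n+1)^j = 0 := by
      have hsum : ∑ j ∈ Finset.range n, L j * (n+1)^j = 0 := by
        rw [hkey, hm0, zero_mul]
      exact fun j hj => (Finset.sum_eq_zero_iff.mp hsum) j hj
    intro i
    by_cases hi : (i:ℕ) < n
    · have h1 := hz (i:ℕ) (Finset.mem_range.mpr hi)
      have h2 : 0 < (n+1)^(i:ℕ) := Nat.pow_pos (by omega)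
      have h3 : L (i:ℕ) = 0 := by
        rcases Nat.mul_eq_zero.mp h1 with h | h
        · exact h
        · omega
      rw [← hLval i]; exact h3
    · have hie : i = Fin.last n := by
        apply Fin.ext
        have := i.isLt
        simp only [Fin.val_last]
        omega
      rw [hie]; exact hm0
  · rcases Nat.eq_zero_or_pos t with ht0 | htpos
    · exfalso
      have ht0' : ∑ j ∈ Finset.range n, L j = 0 := by rw [← htdef]; exact ht0
      have hL0 : ∑ j ∈ Finset.range n, L j * (n+1)^j = 0 := by
        refine Finset.sum_eq_zero fun j hj => ?_
        rw [Finset.sum_eq_zero_iff.mp ht0' j hj, zero_mul]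
      rw [hL0] at hkey
      have hpos : 0 < m * Gn := Nat.mul_pos hm1 hGn1
      omega
    · have htn : t = n := by
        have := Nat.le_of_dvd htpos hdvdt
        omega
      have hm1' : m = 1 := by omega
      right; left
      have hub : ∀ j, j < n → L j < n + 1 := by
        intro j hj
        have hle : L j ≤ t := by
          rw [htdef]
          exact Finset.single_le_sum (fun i _ => Nat.zero_le _) (Finset.mem_range.mpr hj)
        omega
      have heq2 : ∑ j ∈ Finset.range n, L j * (n+1)^j
          = ∑ j ∈ Finset.range n, (fun _ : ℕ => 1) j * (n+1)^j := by
        rw [hkey, hm1', one_mul, hGn]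
        exact Finset.sum_congr rfl (fun j _ => (one_mul _).symm)
      have hLj : ∀ j, j < n → L j = 1 :=
        digits_unique (n+1) (by omega) n L (fun _ => 1) hub (fun j hj => by show (1:ℕ) < n + 1; omega) heq2
      intro i
      by_cases hi : (i:ℕ) < n
      · rw [← hLval i]; exact hLj (i:ℕ) hi
      · have hie : i = Fin.last n := by
          apply Fin.ext
          have := i.isLt
          simp only [Fin.val_last]
          omega
        rw [hie]; exact hm1'
end

section
/- Let k ≥ 2 be an integer and let H ⊆ ℚ_{≥0} be a finitely generated additive submonoid with ℕ ⊆ H such that every atom of H is strictly less than 1. Then there exists a finitely generated additive submonoid H' ⊆ ℚ_{≥0} with H ⊆ H', whose atoms are all strictly less than 1 and include all atoms of H, such that: (a) for every u ∈ H with u < 1, the set of factorizations of u in H equals the set of factorizations of u in H'; and (b) there are pairwise distinct elements q_1, …, q_k ∈ H' such that the set of atoms of H' is the disjoint union of the set of atoms of H and {q_1, …, q_k}, and the set of factorizations of 1 in H' is the disjoint union of the set of factorizations of 1 in H and the single multiset {q_1, …, q_k}. -/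
/-- `u` is an atom of the additive submonoid `H` of `ℚ`: it is a nonzero element of `H`
that is not the sum of two nonzero elements of `H`. -/
def IsAtomOf (H : AddSubmonoid ℚ) (u : ℚ) : Prop :=
  u ∈ H ∧ u ≠ 0 ∧ ∀ v ∈ H, ∀ w ∈ H, v ≠ 0 → w ≠ 0 → u ≠ v + w

/-- `z` is a factorization of `a` in `H`: a multiset of atoms of `H` with sum `a`. -/
def IsFactorizationOf (H : AddSubmonoid ℚ) (a : ℚ) (z : Multiset ℚ) : Prop :=
  (∀ x ∈ z, IsAtomOf H x) ∧ z.sum = a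

/-!
Let `d` be a common denominator of `H`. Choose positive integers `a 1, …, a k` whose sum `N` is
coprime to `d` and can be written as `∑ i, c i * a i` with `c i ∈ ℕ` only for `c = 1`, and
adjoin the shares `q i = a i / N` to `H`. If `h + ∑ i, c i • q i` lies in `H` for some `h ∈ H`,
clearing denominators gives `N ∣ ∑ i, c i * a i`; below `1` this leaves only `c = 0` and the
relation `∑ i, q i = 1`. Hence the atoms of `H` below `1` stay atoms, the `q i` are the only new
atoms, and the only new factorization of an element `≤ 1` of `H` is that of `1` into the `q i`.
-/

open Finset

theorem Nat.sum_mul_pow_eq_ofDigits {n : ℕ} (B : ℕ) (c : Fin n → ℕ) :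
    ∑ i, c i * B ^ (i : ℕ) = Nat.ofDigits B (List.ofFn c) := by
  induction n with
  | zero => simp
  | succ n ih =>
    rw [Fin.sum_univ_succ, List.ofFn_succ, Nat.ofDigits_cons, ← ih, mul_sum]
    simp only [Fin.val_zero, pow_zero, mul_one, Fin.val_succ, pow_succ]
    congr 1
    exact sum_congr rfl fun i _ => by ring

theorem Nat.eq_one_of_sum_mul_pow_eq {n B : ℕ} (hB : 1 < B) {c : Fin n → ℕ}
    (hc : ∀ i, c i < B) (h : ∑ i, c i * B ^ (i : ℕ) = ∑ i : Fin n, B ^ (i : ℕ)) : c = 1 := by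
  have h' : ∑ i, c i * B ^ (i : ℕ) = ∑ i, (1 : Fin n → ℕ) i * B ^ (i : ℕ) := by simpa using h
  rw [Nat.sum_mul_pow_eq_ofDigits, Nat.sum_mul_pow_eq_ofDigits] at h'
  refine List.ofFn_injective (Nat.ofDigits_inj_of_len_eq hB (by simp) ?_ ?_ h')
  · simpa [List.mem_ofFn] using hc
  · simpa [List.mem_ofFn] using fun _ => hB

theorem eq_zero_or_eq_zero_of_add_eq_single {ι : Type*} [DecidableEq ι] {c₁ c₂ : ι → ℕ}
    {j : ι} (h : c₁ + c₂ = Pi.single j 1) : c₁ = 0 ∨ c₂ = 0 := by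
  have hj : c₁ j + c₂ j = 1 := by simpa using congrFun h j
  have hne : ∀ i ≠ j, c₁ i = 0 ∧ c₂ i = 0 := fun i hi => by simpa [hi] using congrFun h i
  rcases Nat.eq_zero_or_pos (c₁ j) with h₁ | h₁
  · left
    funext i
    by_cases hi : i = j
    · simp [hi, h₁]
    · exact (hne i hi).1
  · right
    funext i
    by_cases hi : i = j
    · simp only [hi, Pi.zero_apply]; omega
    · exact (hne i hi).2

theorem Multiset.sum_eq_sum_count_nsmul {α ι : Type*} [AddCommMonoid α] [DecidableEq α]
    [Fintype ι] {f : ι → α} (hf : Function.Injective f) {m : Multiset α}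
    (hm : ∀ x ∈ m, x ∈ Set.range f) : m.sum = ∑ i, m.count (f i) • f i := by
  rw [Finset.sum_multiset_count, ← sum_image (f := fun x => m.count x • x) hf.injOn]
  refine sum_subset (fun x hx => ?_) (fun x _ hx => ?_)
  · obtain ⟨i, rfl⟩ := hm x (Multiset.mem_toFinset.1 hx)
    exact mem_image_of_mem f (mem_univ i)
  · rw [Multiset.count_eq_zero.2 (mt Multiset.mem_toFinset.2 hx), zero_smul]

def HasUniqueSumRep {ι : Type*} [Fintype ι] (a : ι → ℕ) : Prop :=
  ∀ c : ι → ℕ, ∑ i, c i * a i = ∑ i, a i → c = 1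

namespace HasUniqueSumRep

variable {ι : Type*} [Fintype ι] {a : ι → ℕ}

/-- Adding `1 - e` to both coefficient vectors reduces this to the defining property. -/
theorem eq_of_sum_mul_eq (ha : HasUniqueSumRep a) {c e : ι → ℕ} (he : e ≤ 1)
    (h : ∑ i, c i * a i = ∑ i, e i * a i) : c = e := by
  have hsum : ∑ i, (c i + (1 - e i)) * a i = ∑ i, a i := by
    calc ∑ i, (c i + (1 - e i)) * a i = ∑ i, e i * a i + ∑ i, (1 - e i) * a i := by
          rw [← h, ← sum_add_distrib]; simp only [add_mul]
      _ = ∑ i, a i := by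
          rw [← sum_add_distrib]
          refine sum_congr rfl fun i _ => ?_
          have hei : e i ≤ 1 := he i
          rw [← add_mul, Nat.add_sub_cancel' hei, one_mul]
  funext i
  have h₁ := congrFun (ha _ hsum) i
  have h₂ : e i ≤ 1 := he i
  simp only [Pi.one_apply] at h₁ ⊢
  omega

theorem pos (ha : HasUniqueSumRep a) (i : ι) : 0 < a i := by
  classical
  by_contra h0
  have := ha.eq_of_sum_mul_eq (c := Pi.single i 1) (e := 0) zero_le_one
    (by simp [Pi.single_apply]; omega)
  simpa using congrFun this i

theorem injective (ha : HasUniqueSumRep a) : Function.Injective a := by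
  classical
  intro i j hij
  have := ha.eq_of_sum_mul_eq (c := Pi.single i 1) (e := Pi.single j 1)
    (fun l => by by_cases h : l = j <;> simp [h]) (by simp [Pi.single_apply, hij])
  simpa [Pi.single_apply] using congrFun this i

theorem sum_pos [Nonempty ι] (ha : HasUniqueSumRep a) : 0 < ∑ i, a i :=
  Finset.sum_pos (fun i _ => ha.pos i) univ_nonempty

theorem lt_sum [Nontrivial ι] (ha : HasUniqueSumRep a) (i : ι) : a i < ∑ j, a j := by
  classical
  obtain ⟨j, hji⟩ := exists_ne i
  calc a i < a i + a j := Nat.lt_add_of_pos_right (ha.pos j)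
    _ = ∑ l ∈ {i, j}, a l := (sum_pair hji.symm).symm
    _ ≤ ∑ l, a l := sum_le_sum_of_subset (subset_univ _)

end HasUniqueSumRep

/-- The shift `M` forces every representation of the total to use exactly `k` summands, and
then the base-`B` digits of `∑ i, B ^ i` force all coefficients to be `1`. -/
theorem hasUniqueSumRep_add_pow {k B M : ℕ} (hk : k ≠ 0) (hkB : k < B)
    (hM : (k + 1) * ∑ i : Fin k, B ^ (i : ℕ) ≤ M) :
    HasUniqueSumRep fun i : Fin k => M + B ^ (i : ℕ) := by
  intro c hc
  set T := ∑ i : Fin k, B ^ (i : ℕ)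
  set s := ∑ i, c i
  have hT : 1 ≤ T := by
    obtain ⟨k, rfl⟩ := Nat.exists_eq_add_one_of_ne_zero hk
    simp [T, Fin.sum_univ_succ]
  have hsplit : ∑ i, c i * (M + B ^ (i : ℕ)) = s * M + ∑ i, c i * B ^ (i : ℕ) := by
    simp only [mul_add, sum_add_distrib, s, sum_mul]
  have htotal : ∑ i : Fin k, (M + B ^ (i : ℕ)) = k * M + T := by
    simp [sum_add_distrib, T]
  have hdigits_le : ∑ i, c i * B ^ (i : ℕ) ≤ s * T := by
    rw [sum_mul]
    exact sum_le_sum fun i _ => Nat.mul_le_mul_left _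
      (single_le_sum (f := fun i : Fin k => B ^ (i : ℕ)) (fun _ _ => Nat.zero_le _) (mem_univ i))
  rw [hsplit, htotal] at hc
  have hs : s = k := by
    have hle : s ≤ k := by
      by_contra! h
      linarith [Nat.mul_le_mul_right M h, Nat.mul_le_mul_right T (Nat.one_le_iff_ne_zero.2 hk),
        Nat.zero_le (∑ i, c i * B ^ (i : ℕ))]
    have hge : ¬ s < k := fun h => by
      linarith [Nat.mul_le_mul_right (M + T) (Nat.succ_le_of_lt h)]
    omega
  have hdigits : ∑ i, c i * B ^ (i : ℕ) = T := by
    rw [hs] at hc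
    omega
  refine Nat.eq_one_of_sum_mul_pow_eq (by omega) (fun i => ?_) hdigits
  have : c i ≤ s := single_le_sum (f := c) (fun _ _ => Nat.zero_le _) (mem_univ i)
  omega

theorem exists_hasUniqueSumRep_coprime {k d : ℕ} (hk : k ≠ 0) (hd : 0 < d) :
    ∃ a : Fin k → ℕ, HasUniqueSumRep a ∧ (∑ i, a i).Coprime d := by
  set B := (k + 1) * d
  set M := B * ∑ i : Fin k, B ^ (i : ℕ)
  have hkB : k < B := Nat.le_mul_of_pos_right _ hd
  refine ⟨_, hasUniqueSumRep_add_pow (M := M) hk hkB (Nat.mul_le_mul_right _ hkB), ?_⟩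
  -- `d ∣ B ∣ M`, so the total is `≡ B ^ 0 = 1` modulo `d`.
  rw [← ZMod.isUnit_iff_coprime]
  obtain ⟨k, rfl⟩ := Nat.exists_eq_add_one_of_ne_zero hk
  have hB : (B : ZMod d) = 0 := by simp [B]
  simp [M, hB, Fin.sum_univ_succ]

def HasCoprimeDenominator (H : AddSubmonoid ℚ) (N : ℕ) : Prop :=
  ∃ d : ℕ, 0 < d ∧ N.Coprime d ∧ ∀ x ∈ H, ∃ n : ℕ, x = n / d

theorem HasCoprimeDenominator.nonneg {H : AddSubmonoid ℚ} {N : ℕ}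
    (hH : HasCoprimeDenominator H N) {x : ℚ} (hx : x ∈ H) : 0 ≤ x := by
  obtain ⟨d, -, -, hden⟩ := hH
  obtain ⟨n, rfl⟩ := hden x hx
  positivity

theorem AddSubmonoid.FG.exists_natCast_div {H : AddSubmonoid ℚ} (hfg : H.FG)
    (hpos : ∀ x ∈ H, 0 ≤ x) : ∃ d : ℕ, 0 < d ∧ ∀ x ∈ H, ∃ n : ℕ, x = n / d := by
  obtain ⟨S, rfl⟩ := hfg
  set d := ∏ s ∈ S, s.den
  have hd : 0 < d := prod_pos fun s _ => Rat.pos s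
  have hle : AddSubmonoid.closure (S : Set ℚ) ≤
      (AddSubgroup.zmultiples ((d : ℚ)⁻¹)).toAddSubmonoid := by
    refine AddSubmonoid.closure_le.2 fun s hs => AddSubgroup.mem_zmultiples_iff.2 ?_
    obtain ⟨e, he⟩ := dvd_prod_of_mem Rat.den hs
    have hde : (d : ℚ) = s.den * e := by exact_mod_cast he
    have he0 : (e : ℚ) ≠ 0 := by rintro h; simp [h] at hde; omega
    refine ⟨s.num * e, ?_⟩
    rw [zsmul_eq_mul, hde]
    push_cast
    rw [← Rat.mul_den_eq_num]
    field_simp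
  refine ⟨d, hd, fun x hx => ?_⟩
  obtain ⟨n, rfl⟩ := AddSubgroup.mem_zmultiples_iff.1 (hle hx)
  have hn : 0 ≤ n := by
    have := hpos _ hx
    rw [zsmul_eq_mul] at this
    exact_mod_cast nonneg_of_mul_nonneg_left this (by positivity)
  refine ⟨n.toNat, ?_⟩
  rw [zsmul_eq_mul, div_eq_mul_inv, ← Int.toNat_of_nonneg hn]
  rfl

theorem intCast_dvd_sub_of_div_add_div_eq {d N n m S t : ℕ} (hd : 0 < d) (hN : 0 < N)
    (hcop : N.Coprime d) (h : (n / d + S / N : ℚ) = m / d + t / N) : (N : ℤ) ∣ S - t := by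
  have hcross : ((S : ℤ) - t) * d = (m - n) * N := by
    field_simp at h
    exact_mod_cast (by linear_combination h : ((S : ℚ) - t) * d = (m - n) * N)
  exact (Nat.isCoprime_iff_coprime.2 hcop).dvd_of_dvd_mul_right ⟨m - n, by rw [hcross, mul_comm]⟩

theorem IsAtomOf.of_le {H H' : AddSubmonoid ℚ} (hle : H ≤ H') {u : ℚ} (hu : IsAtomOf H' u)
    (huH : u ∈ H) : IsAtomOf H u :=
  ⟨huH, hu.2.1, fun v hv w hw => hu.2.2 v (hle hv) w (hle hw)⟩

theorem IsAtomOf.mem_of_closure {s : Set ℚ} {u : ℚ}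
    (hu : IsAtomOf (AddSubmonoid.closure s) u) : u ∈ s := by
  induction hu.1 using AddSubmonoid.closure_induction_left with
  | zero => exact absurd rfl hu.2.1
  | add_left x hx y hy ih =>
    by_cases hx0 : x = 0
    · subst hx0
      simpa using ih (by simpa using hu)
    by_cases hy0 : y = 0
    · subst hy0
      simpa using hx
    exact absurd rfl (hu.2.2 x (AddSubmonoid.subset_closure hx) y hy hx0 hy0)

section adjoinShares

variable {ι : Type*} [Fintype ι] {a : ι → ℕ} {H : AddSubmonoid ℚ}

def shares (a : ι → ℕ) (i : ι) : ℚ := a i / (∑ j, a j : ℕ)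

theorem sum_nsmul_shares (c : ι → ℕ) :
    ∑ i, c i • shares a i = (∑ i, c i * a i : ℕ) / (∑ j, a j : ℕ) := by
  simp only [shares, nsmul_eq_mul, Nat.cast_sum, Nat.cast_mul, sum_div, mul_div_assoc]

def adjoinShares (H : AddSubmonoid ℚ) (a : ι → ℕ) : AddSubmonoid ℚ :=
  H ⊔ AddSubmonoid.closure (Set.range (shares a))

theorem mem_adjoinShares {x : ℚ} :
    x ∈ adjoinShares H a ↔ ∃ h ∈ H, ∃ c : ι → ℕ, h + ∑ i, c i • shares a i = x := by
  simp only [adjoinShares, AddSubmonoid.mem_sup, AddSubmonoid.mem_closure_range_iff_of_fintype]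
  constructor
  · rintro ⟨h, hh, _, ⟨c, rfl⟩, rfl⟩
    exact ⟨h, hh, c, rfl⟩
  · rintro ⟨h, hh, c, rfl⟩
    exact ⟨h, hh, _, ⟨c, rfl⟩, rfl⟩

theorem le_adjoinShares : H ≤ adjoinShares H a := le_sup_left

theorem shares_mem_adjoinShares (i : ι) : shares a i ∈ adjoinShares H a :=
  le_sup_right (a := H) (AddSubmonoid.subset_closure (Set.mem_range_self i))

theorem adjoinShares_eq_closure :
    adjoinShares H a = AddSubmonoid.closure (H ∪ Set.range (shares a)) := by
  rw [AddSubmonoid.closure_union, AddSubmonoid.closure_eq, adjoinShares]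

theorem AddSubmonoid.FG.adjoinShares (hfg : H.FG) : (adjoinShares H a).FG := by
  classical
  exact hfg.sup ⟨univ.image (shares a), by simp⟩

theorem nonneg_of_mem_adjoinShares (hpos : ∀ x ∈ H, 0 ≤ x) {x : ℚ}
    (hx : x ∈ adjoinShares H a) : 0 ≤ x := by
  obtain ⟨h, hh, c, rfl⟩ := mem_adjoinShares.1 hx
  exact add_nonneg (hpos h hh) (sum_nonneg fun i _ => by unfold shares; positivity)

end adjoinShares

namespace HasUniqueSumRep

variable {ι : Type*} [Fintype ι] {a : ι → ℕ} {H : AddSubmonoid ℚ}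

theorem shares_pos [Nonempty ι] (ha : HasUniqueSumRep a) (i : ι) : 0 < shares a i :=
  div_pos (mod_cast ha.pos i) (mod_cast ha.sum_pos)

theorem shares_lt_one [Nontrivial ι] (ha : HasUniqueSumRep a) (i : ι) : shares a i < 1 :=
  (div_lt_one (mod_cast ha.sum_pos)).2 (mod_cast ha.lt_sum i)

theorem injective_shares [Nonempty ι] (ha : HasUniqueSumRep a) :
    Function.Injective (shares a) := fun i j hij =>
  ha.injective (by exact_mod_cast (div_left_inj' (mod_cast ha.sum_pos.ne')).1 hij)

theorem eq_zero_or_eq_one_of_add_sum_nsmul_shares_eq [Nonempty ι] (ha : HasUniqueSumRep a)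
    (hH : HasCoprimeDenominator H (∑ i, a i)) {c : ι → ℕ} {h x : ℚ} (hh : h ∈ H) (hx : x ∈ H)
    (hx1 : x ≤ 1) (heq : h + ∑ i, c i • shares a i = x) :
    (c = 0 ∧ h = x) ∨ (c = 1 ∧ h = 0 ∧ x = 1) := by
  obtain ⟨d, hd, hcop, hden⟩ := hH
  obtain ⟨n, rfl⟩ := hden h hh
  obtain ⟨m, rfl⟩ := hden x hx
  rw [sum_nsmul_shares] at heq
  set N := ∑ i, a i
  set S := ∑ i, c i * a i
  have hdvd : (N : ℤ) ∣ S - 0 :=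
    intCast_dvd_sub_of_div_add_div_eq hd ha.sum_pos hcop (m := m) (by rw [heq]; simp)
  obtain ⟨j, hj⟩ := Int.natCast_dvd_natCast.1 (by simpa using hdvd)
  have hSN : (S / N : ℚ) = j := by
    rw [hj]
    push_cast
    field_simp [(by exact_mod_cast ha.sum_pos.ne' : (N : ℚ) ≠ 0)]
  have hnd : (0 : ℚ) ≤ n / d := by positivity
  have hj1 : j ≤ 1 := by exact_mod_cast (by linarith : (j : ℚ) ≤ 1)
  interval_cases j
  · refine Or.inl ⟨ha.eq_of_sum_mul_eq (e := 0) zero_le_one ?_, by simpa [hSN] using heq⟩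
    simp only [Pi.zero_apply, zero_mul, sum_const_zero]
    exact hj.trans (mul_zero N)
  · refine Or.inr ⟨ha c (by simpa using hj), ?_⟩
    have : (n / d : ℚ) = 0 := by linarith
    exact ⟨this, by linarith⟩

theorem eq_single_of_add_sum_nsmul_shares_eq_shares [Nontrivial ι] [DecidableEq ι]
    (ha : HasUniqueSumRep a) (hH : HasCoprimeDenominator H (∑ i, a i)) {c : ι → ℕ} {h : ℚ}
    {j : ι} (hh : h ∈ H) (heq : h + ∑ i, c i • shares a i = shares a j) :
    h = 0 ∧ c = Pi.single j 1 := by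
  obtain ⟨d, hd, hcop, hden⟩ := hH
  obtain ⟨n, rfl⟩ := hden h hh
  rw [sum_nsmul_shares, show shares a j = a j / (∑ i, a i : ℕ) from rfl] at heq
  set N := ∑ i, a i
  set S := ∑ i, c i * a i
  have hdvd : (N : ℤ) ∣ S - a j :=
    intCast_dvd_sub_of_div_add_div_eq hd ha.sum_pos hcop (m := 0) (by rw [heq]; simp)
  have hnd : (0 : ℚ) ≤ n / d := by positivity
  have hS : S ≤ a j := by
    have : (S / N : ℚ) ≤ a j / N := by rw [← heq]; linarith
    exact_mod_cast (div_le_div_iff_of_pos_right (mod_cast ha.sum_pos)).1 this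
  have hSj : S = a j := by
    have := Int.eq_zero_of_dvd_of_nonneg_of_lt (m := (a j : ℤ) - S) (n := N) (by omega)
      (by have := ha.lt_sum j; omega) (by simpa using hdvd.neg_right)
    omega
  refine ⟨by rw [hSj] at heq; linarith, ?_⟩
  exact ha.eq_of_sum_mul_eq (fun l => by by_cases h : l = j <;> simp [h])
    (by simpa [Pi.single_apply] using hSj)

theorem shares_notMem [Nontrivial ι] (ha : HasUniqueSumRep a)
    (hH : HasCoprimeDenominator H (∑ i, a i)) (j : ι) : shares a j ∉ H := by
  classical
  intro hj
  have := (ha.eq_single_of_add_sum_nsmul_shares_eq_shares hH (c := 0) (j := j) hj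
    (by simp)).2
  simpa using congrFun this j

theorem isAtomOf_shares [Nontrivial ι] (ha : HasUniqueSumRep a)
    (hH : HasCoprimeDenominator H (∑ i, a i)) (j : ι) :
    IsAtomOf (adjoinShares H a) (shares a j) := by
  classical
  refine ⟨shares_mem_adjoinShares j, (ha.shares_pos j).ne', fun v hv w hw hv0 hw0 hvw => ?_⟩
  obtain ⟨h₁, hh₁, c₁, rfl⟩ := mem_adjoinShares.1 hv
  obtain ⟨h₂, hh₂, c₂, rfl⟩ := mem_adjoinShares.1 hw
  obtain ⟨hh, hc⟩ := ha.eq_single_of_add_sum_nsmul_shares_eq_shares hH (c := c₁ + c₂)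
    (add_mem hh₁ hh₂) (by rw [hvw]; simp only [Pi.add_apply, add_nsmul, sum_add_distrib]; ring)
  have h₁0 : h₁ = 0 := by linarith [hH.nonneg hh₁, hH.nonneg hh₂]
  have h₂0 : h₂ = 0 := by linarith [hH.nonneg hh₁, hH.nonneg hh₂]
  rcases eq_zero_or_eq_zero_of_add_eq_single hc with rfl | rfl
  · exact hv0 (by simp [h₁0])
  · exact hw0 (by simp [h₂0])

theorem isAtomOf_adjoinShares [Nonempty ι] (ha : HasUniqueSumRep a)
    (hH : HasCoprimeDenominator H (∑ i, a i)) {u : ℚ} (hu : IsAtomOf H u) (hu1 : u < 1) :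
    IsAtomOf (adjoinShares H a) u := by
  refine ⟨le_adjoinShares hu.1, hu.2.1, fun v hv w hw hv0 hw0 hvw => ?_⟩
  obtain ⟨h₁, hh₁, c₁, rfl⟩ := mem_adjoinShares.1 hv
  obtain ⟨h₂, hh₂, c₂, rfl⟩ := mem_adjoinShares.1 hw
  rcases ha.eq_zero_or_eq_one_of_add_sum_nsmul_shares_eq hH (c := c₁ + c₂) (add_mem hh₁ hh₂)
    hu.1 hu1.le (by rw [hvw]; simp only [Pi.add_apply, add_nsmul, sum_add_distrib]; ring) with
    ⟨hc, -⟩ | ⟨-, -, rfl⟩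
  · obtain ⟨rfl, rfl⟩ : c₁ = 0 ∧ c₂ = 0 := by simpa [funext_iff, forall_and] using hc
    simp only [Pi.zero_apply, zero_smul, sum_const_zero, add_zero] at hv0 hw0 hvw
    exact hu.2.2 h₁ hh₁ h₂ hh₂ hv0 hw0 hvw
  · exact lt_irrefl _ hu1

theorem isAtomOf_adjoinShares_iff [Nontrivial ι] (ha : HasUniqueSumRep a)
    (hH : HasCoprimeDenominator H (∑ i, a i)) (hatoms : ∀ u, IsAtomOf H u → u < 1) {u : ℚ} :
    IsAtomOf (adjoinShares H a) u ↔ IsAtomOf H u ∨ u ∈ Set.range (shares a) := by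
  refine ⟨fun hu => ?_, ?_⟩
  · rw [adjoinShares_eq_closure] at hu
    refine hu.mem_of_closure.imp (fun huH => hu.of_le ?_ huH) id
    rw [← adjoinShares_eq_closure]
    exact le_adjoinShares
  · rintro (hu | ⟨j, rfl⟩)
    · exact ha.isAtomOf_adjoinShares hH hu (hatoms u hu)
    · exact ha.isAtomOf_shares hH j

theorem isFactorizationOf_of_adjoinShares [Nontrivial ι] (ha : HasUniqueSumRep a)
    (hH : HasCoprimeDenominator H (∑ i, a i)) (hatoms : ∀ u, IsAtomOf H u → u < 1) {x : ℚ}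
    (hx : x ∈ H) (hx1 : x ≤ 1) {z : Multiset ℚ}
    (hz : IsFactorizationOf (adjoinShares H a) x z) :
    IsFactorizationOf H x z ∨ (x = 1 ∧ z = univ.val.map (shares a)) := by
  classical
  obtain ⟨hzat, hzsum⟩ := hz
  have hatom := fun y => ha.isAtomOf_adjoinShares_iff (H := H) hH hatoms (u := y)
  set zH := z.filter (· ∉ Set.range (shares a))
  have hzH : ∀ y ∈ zH, IsAtomOf H y := fun y hy => by
    rw [Multiset.mem_filter] at hy
    exact ((hatom y).1 (hzat y hy.1)).resolve_right hy.2
  have hzQ : (z.filter (· ∈ Set.range (shares a))).sum =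
      ∑ i, z.count (shares a i) • shares a i := by
    rw [Multiset.sum_eq_sum_count_nsmul ha.injective_shares
      fun y hy => (Multiset.mem_filter.1 hy).2]
    simp only [Multiset.count_filter_of_pos (Set.mem_range_self _)]
  have hsum : zH.sum + ∑ i, z.count (shares a i) • shares a i = x := by
    rw [← hzQ, add_comm, ← Multiset.sum_add, Multiset.filter_add_not, hzsum]
  rcases ha.eq_zero_or_eq_one_of_add_sum_nsmul_shares_eq hH
    (AddSubmonoid.multiset_sum_mem _ _ fun y hy => (hzH y hy).1) hx hx1 hsum with
    ⟨hc, -⟩ | ⟨hc, hzHsum, rfl⟩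
  · refine Or.inl ⟨fun y hy => ((hatom y).1 (hzat y hy)).resolve_right ?_, hzsum⟩
    rintro ⟨i, rfl⟩
    exact Multiset.count_ne_zero.2 hy (congrFun hc i)
  · refine Or.inr ⟨rfl, Multiset.ext.2 fun y => ?_⟩
    have hzH0 : zH = 0 := Multiset.eq_zero_of_forall_notMem fun y hy =>
      (lt_of_le_of_ne (hH.nonneg (hzH y hy).1) (hzH y hy).2.1.symm).not_ge
        (hzHsum ▸ Multiset.single_le_sum (fun y hy => hH.nonneg (hzH y hy).1) y hy)
    by_cases hy : y ∈ Set.range (shares a)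
    · obtain ⟨i, rfl⟩ := hy
      rw [congrFun hc i, Multiset.count_map_eq_count' _ _ ha.injective_shares,
        Multiset.count_univ]
      rfl
    · have hyz : y ∉ z := fun h =>
        Multiset.notMem_zero y (hzH0 ▸ Multiset.mem_filter.2 ⟨h, hy⟩)
      have hymap : y ∉ univ.val.map (shares a) := fun h => hy (by simpa using h)
      rw [Multiset.count_eq_zero.2 hyz, Multiset.count_eq_zero.2 hymap]

theorem isFactorizationOf_one_shares [Nontrivial ι] (ha : HasUniqueSumRep a)
    (hH : HasCoprimeDenominator H (∑ i, a i)) :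
    IsFactorizationOf (adjoinShares H a) 1 (univ.val.map (shares a)) := by
  refine ⟨fun y hy => ?_, ?_⟩
  · obtain ⟨i, -, rfl⟩ := Multiset.mem_map.1 hy
    exact ha.isAtomOf_shares hH i
  · rw [Finset.sum_map_val]
    simp only [shares, ← sum_div, ← Nat.cast_sum]
    exact div_self (mod_cast ha.sum_pos.ne')

end HasUniqueSumRep

/-- Let `k ≥ 2` and let `H ⊆ ℚ_{≥0}` be a finitely generated additive
submonoid with `ℕ ⊆ H` all of whose atoms are `< 1`. Then there is a finitely generated
additive submonoid `H' ⊆ ℚ_{≥0}` containing `H`, all of whose atoms are `< 1`, such that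
(a) factorizations in `H` and `H'` agree for every `u ∈ H` with `u < 1`, and
(b) there are pairwise distinct `q 1, …, q k` such that the atoms of `H'` are the
disjoint union of the atoms of `H` and `{q 1, …, q k}`, and the factorizations of `1`
in `H'` are the disjoint union of those in `H` and the single multiset `{q 1, …, q k}`. -/
theorem stmt3 (k : ℕ) (hk : 2 ≤ k) (H : AddSubmonoid ℚ) (hfg : H.FG)
    (hpos : ∀ x ∈ H, 0 ≤ x) (hN : ∀ n : ℕ, (n : ℚ) ∈ H)
    (hatoms : ∀ u, IsAtomOf H u → u < 1) :
    ∃ H' : AddSubmonoid ℚ, H ≤ H' ∧ H'.FG ∧ (∀ x ∈ H', 0 ≤ x) ∧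
      (∀ u, IsAtomOf H' u → u < 1) ∧
      (∀ u, IsAtomOf H u → IsAtomOf H' u) ∧
      (∀ u ∈ H, u < 1 → ∀ z, IsFactorizationOf H u z ↔ IsFactorizationOf H' u z) ∧
      ∃ q : Fin k → ℚ, Function.Injective q ∧
        (∀ i, ¬ IsAtomOf H (q i)) ∧
        ({u | IsAtomOf H' u} = {u | IsAtomOf H u} ∪ Set.range q) ∧
        (¬ IsFactorizationOf H 1 (Multiset.map q Finset.univ.val)) ∧
        (∀ z, IsFactorizationOf H' 1 z ↔
          IsFactorizationOf H 1 z ∨ z = Multiset.map q Finset.univ.val) := by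
  have : Nontrivial (Fin k) := Fin.nontrivial_iff_two_le.2 hk
  obtain ⟨d, hd, hden⟩ := hfg.exists_natCast_div hpos
  obtain ⟨a, ha, hcop⟩ := exists_hasUniqueSumRep_coprime (by omega : k ≠ 0) hd
  have hH : HasCoprimeDenominator H (∑ i, a i) := ⟨d, hd, hcop, hden⟩
  have hatom := fun u => ha.isAtomOf_adjoinShares_iff hH hatoms (u := u)
  have hmono : ∀ x z, IsFactorizationOf H x z → IsFactorizationOf (adjoinShares H a) x z :=
    fun x z hz => ⟨fun y hy => (hatom y).2 (Or.inl (hz.1 y hy)), hz.2⟩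
  have h1 : (1 : ℚ) ∈ H := by exact_mod_cast hN 1
  refine ⟨adjoinShares H a, le_adjoinShares, hfg.adjoinShares,
    fun x => nonneg_of_mem_adjoinShares hpos, fun u hu => ?_,
    fun u hu => (hatom u).2 (Or.inl hu), fun u hu hu1 z => ⟨hmono u z, fun hz => ?_⟩,
    shares a, ha.injective_shares, fun i hi => ha.shares_notMem hH i hi.1,
    Set.ext hatom, fun hz => ?_, fun z => ⟨fun hz => ?_, ?_⟩⟩
  · exact ((hatom u).1 hu).elim (hatoms u) fun ⟨i, hi⟩ => hi ▸ ha.shares_lt_one i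
  · exact (ha.isFactorizationOf_of_adjoinShares hH hatoms hu hu1.le hz).resolve_right
      fun h => hu1.ne h.1
  · obtain ⟨i⟩ := (inferInstance : Nonempty (Fin k))
    exact ha.shares_notMem hH i (hz.1 _ (Multiset.mem_map_of_mem _ (mem_univ_val i))).1
  · exact (ha.isFactorizationOf_of_adjoinShares hH hatoms h1 le_rfl hz).imp id And.right
  · rintro (hz | rfl)
    · exact hmono 1 z hz
    · exact ha.isFactorizationOf_one_shares hH
end

section
/- Let k ≥ 2 be an integer, let c_i = k^{i−1} for 1 ≤ i ≤ k−1 and c_k = −∑_{i=1}^{k−1} k^{i−1}, let p be a prime with p > (k+1)·k^{k−1}, and set q_i = (p + c_i)/(kp) ∈ ℚ for 1 ≤ i ≤ k. Let H ⊆ ℚ_{≥0} be an additive submonoid such that every element of H has nonnegative p-adic valuation, and let H' be the additive submonoid of ℚ_{≥0} generated by H together with q_1, …, q_k. Then each q_i is an atom of H'. -/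
theorem natCast_dvd_of_mul_mul_eq_intCast {p : ℕ} (hp : p.Prime) {x : ℚ}
    (hx : x ≠ 0 → 0 ≤ padicValRat p x) (n : ℕ) {M : ℤ} (h : n * p * x = M) : (p : ℤ) ∣ M := by
  have := Fact.mk hp
  rcases eq_or_ne M 0 with rfl | hM
  · exact dvd_zero _
  have hnpx : (n * p : ℚ) ≠ 0 ∧ x ≠ 0 := by
    have : (n * p * x : ℚ) ≠ 0 := h ▸ Int.cast_ne_zero.2 hM
    exact ⟨left_ne_zero_of_mul this, right_ne_zero_of_mul this⟩
  have hn : (n : ℚ) ≠ 0 := left_ne_zero_of_mul hnpx.1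
  have hval : padicValRat p M = padicValNat p n + 1 + padicValRat p x := by
    rw [← h, padicValRat.mul hnpx.1 hnpx.2, padicValRat.mul hn (by exact_mod_cast hp.ne_zero),
      padicValRat.of_nat, padicValRat.self hp.one_lt]
  have := hx hnpx.2
  rw [padicValRat.of_int] at hval
  simpa using (padicValInt_dvd_iff 1 M).2 (Or.inr (by omega))

theorem exists_eq_pi_single_of_sum_eq_one {ι : Type*} [Fintype ι] [DecidableEq ι] {a : ι → ℕ}
    (h : ∑ j, a j = 1) : ∃ j, a = Pi.single j 1 := by
  obtain ⟨j, hj⟩ := (Finsupp.sum_eq_one_iff (Finsupp.equivFunOnFinite.symm a)).1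
    (by rwa [Finsupp.sum_fintype _ _ fun _ => rfl])
  exact ⟨j, by simpa [← Finsupp.single_eq_pi_single] using congrArg Finsupp.equivFunOnFinite hj⟩

section

variable {ι : Type*} [Fintype ι] {p k : ℕ} {c : ι → ℤ} {K : ℤ} {q : ι → ℚ}

theorem natCast_mul_mul_eq_of_add_sum_eq (hk : 0 < k) (hp : 0 < p)
    (hq : ∀ j, q j = ((p : ℚ) + c j) / ((k : ℚ) * p)) {h : ℚ} {a : ι → ℕ} {i : ι}
    (heq : h + ∑ j, a j • q j = q i) :
    (k * p : ℚ) * h = ((p + c i - ∑ j, (a j : ℤ) * (p + c j) : ℤ) : ℚ) := by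
  have hkp : (k * p : ℚ) ≠ 0 := by positivity
  rw [eq_sub_of_add_eq heq]
  simp only [hq, nsmul_eq_mul, mul_div_assoc', ← Finset.sum_div]
  push_cast
  field_simp

variable [DecidableEq ι]

theorem eq_zero_and_eq_pi_single_of_add_sum_eq (hp : p.Prime) (hk : 0 < k)
    (hc0 : ∀ j, c j ≠ 0) (hcK : ∀ j, |c j| ≤ K) (hc : Function.Injective c) (hpK : 3 * K < p)
    (hq : ∀ j, q j = ((p : ℚ) + c j) / ((k : ℚ) * p)) {h : ℚ} (h0 : 0 ≤ h)
    (hval : h ≠ 0 → 0 ≤ padicValRat p h) {a : ι → ℕ} {i : ι}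
    (heq : h + ∑ j, a j • q j = q i) : h = 0 ∧ a = Pi.single i 1 := by
  have hM := natCast_mul_mul_eq_of_add_sum_eq hk hp.pos hq heq
  set M := (p + c i - ∑ j, (a j : ℤ) * (p + c j) : ℤ)
  have hdvd : (p : ℤ) ∣ M := natCast_dvd_of_mul_mul_eq_intCast hp hval k hM
  have hM0 : 0 ≤ M := by exact_mod_cast hM ▸ (by positivity : (0 : ℚ) ≤ k * p * h)
  have habs : ∀ j, -K ≤ c j ∧ c j ≤ K := fun j => abs_le.1 (hcK j)
  have hsum : (∑ j, a j : ℕ) * ((p : ℤ) - K) ≤ ∑ j, (a j : ℤ) * (p + c j) := by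
    push_cast
    rw [Finset.sum_mul]
    gcongr with j
    linarith [habs j]
  have hs : ∑ j, a j ≤ 1 := by
    by_contra! hs
    have : (2 : ℤ) * (p - K) ≤ (∑ j, a j : ℕ) * ((p : ℤ) - K) := by
      gcongr
      · linarith [habs i]
      · exact_mod_cast hs
    linarith [habs i]
  rcases Nat.le_one_iff_eq_zero_or_eq_one.1 hs with hs | hs
  · have ha : a = 0 := funext fun j => Finset.sum_eq_zero_iff.1 hs j (Finset.mem_univ j)
    have hMi : M = p + c i := by simp [M, ha]
    exact absurd (Int.eq_zero_of_abs_lt_dvd ((dvd_add_right (dvd_refl _)).1 (hMi ▸ hdvd))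
      (by linarith [hcK i])) (hc0 i)
  · obtain ⟨j, rfl⟩ := exists_eq_pi_single_of_sum_eq_one hs
    have hMj : M = c i - c j := by simp [M, Pi.single_apply]
    have hMz : M = 0 := Int.eq_zero_of_abs_lt_dvd hdvd <| by
      rw [hMj, abs_lt]; constructor <;> linarith [habs i, habs j]
    have hji : j = i := hc (by linarith)
    refine ⟨?_, hji ▸ rfl⟩
    rw [hMz, Int.cast_zero] at hM
    exact (mul_eq_zero.1 hM).resolve_left (by have := hp.pos; positivity)

theorem isAtomOf_sup_closure_range (hp : p.Prime) (hk : 0 < k)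
    (hc0 : ∀ j, c j ≠ 0) (hcK : ∀ j, |c j| ≤ K) (hc : Function.Injective c) (hpK : 3 * K < p)
    (hq : ∀ j, q j = ((p : ℚ) + c j) / ((k : ℚ) * p)) {H : AddSubmonoid ℚ}
    (hpos : ∀ x ∈ H, 0 ≤ x) (hval : ∀ x ∈ H, x ≠ 0 → 0 ≤ padicValRat p x) (i : ι) :
    IsAtomOf (H ⊔ AddSubmonoid.closure (Set.range q)) (q i) := by
  refine ⟨AddSubmonoid.mem_sup_right (AddSubmonoid.subset_closure (Set.mem_range_self i)), ?_, ?_⟩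
  · have hpc : (0 : ℤ) < p + c i := by linarith [neg_abs_le (c i), hcK i, abs_nonneg (c i)]
    have := hp.pos
    rw [hq]
    exact div_ne_zero (by exact_mod_cast hpc.ne') (by positivity)
  rintro _ hv _ hw hv0 hw0 heq
  obtain ⟨y, hy, _, hm, rfl⟩ := AddSubmonoid.mem_sup.1 hv
  obtain ⟨y', hy', _, hn, rfl⟩ := AddSubmonoid.mem_sup.1 hw
  obtain ⟨m, rfl⟩ := AddSubmonoid.mem_closure_range_iff_of_fintype.1 hm
  obtain ⟨n, rfl⟩ := AddSubmonoid.mem_closure_range_iff_of_fintype.1 hn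
  have hyy' := H.add_mem hy hy'
  obtain ⟨hzero, hmn⟩ := eq_zero_and_eq_pi_single_of_add_sum_eq hp hk hc0 hcK hc hpK hq
    (hpos _ hyy') (hval _ hyy') (a := m + n) (i := i)
    (by rw [heq]; simp only [Pi.add_apply, add_smul, Finset.sum_add_distrib]; ring)
  have hy0 : y = 0 := by linarith [hpos y hy, hpos y' hy']
  have hy'0 : y' = 0 := by linarith [hpos y hy, hpos y' hy']
  have hsum : ∑ j, m j + ∑ j, n j = 1 := by
    simpa [← Finset.sum_add_distrib] using congrArg (fun a : ι → ℕ => ∑ j, a j) hmn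
  have hsum_smul : ∀ a : ι → ℕ, ∑ j, a j = 0 → ∑ j, a j • q j = 0 := fun a ha =>
    Finset.sum_eq_zero fun j _ => by
      rw [Finset.sum_eq_zero_iff.1 ha j (Finset.mem_univ j), zero_smul]
  rcases Nat.eq_zero_or_pos (∑ j, m j) with hm0 | hm0
  · exact hv0 (by rw [hy0, hsum_smul m hm0, add_zero])
  · exact hw0 (by rw [hy'0, hsum_smul n (by omega), add_zero])

end

theorem sum_range_pow_lt_pow {k : ℕ} (hk : 2 ≤ k) (n : ℕ) :
    ∑ j ∈ Finset.range n, (k : ℤ) ^ j < (k : ℤ) ^ n := by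
  exact_mod_cast Nat.geomSum_lt hk fun j hj => Finset.mem_range.1 hj

/-- The paper's `c_{i+1}`: indices start at `0`. -/
def atomCoeff (k : ℕ) (i : Fin k) : ℤ :=
  if (i : ℕ) + 1 < k then (k : ℤ) ^ (i : ℕ) else -(∑ j ∈ Finset.range (k - 1), (k : ℤ) ^ j)

theorem atomCoeff_ne_zero {k : ℕ} (hk : 2 ≤ k) (i : Fin k) : atomCoeff k i ≠ 0 := by
  unfold atomCoeff
  split_ifs
  · exact pow_ne_zero _ (by omega)
  · refine neg_ne_zero.2 (Finset.sum_pos (fun j _ => pow_pos (by omega) j) ?_).ne'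
    exact Finset.nonempty_range_iff.2 (by omega)

theorem abs_atomCoeff_le {k : ℕ} (hk : 2 ≤ k) (i : Fin k) :
    |atomCoeff k i| ≤ (k : ℤ) ^ (k - 1) := by
  unfold atomCoeff
  split_ifs
  · rw [abs_of_pos (pow_pos (by omega) _)]
    exact pow_le_pow_right₀ (by omega) (by omega)
  · rw [abs_neg, abs_of_nonneg (by positivity)]
    exact (sum_range_pow_lt_pow hk _).le

theorem atomCoeff_injective {k : ℕ} (hk : 2 ≤ k) : Function.Injective (atomCoeff k) := by
  intro i j h
  unfold atomCoeff at h
  have hS : 0 ≤ ∑ j ∈ Finset.range (k - 1), (k : ℤ) ^ j := by positivity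
  split_ifs at h
  · exact Fin.ext (pow_right_injective₀ (by omega) (by omega) h)
  · linarith [pow_pos (by omega : (0 : ℤ) < k) (i : ℕ)]
  · linarith [pow_pos (by omega : (0 : ℤ) < k) (j : ℕ)]
  · exact Fin.ext (by omega)

/-- With `k ≥ 2`, the explicit integers `c i = k^i` (for `i + 1 < k`,
indexing from `0`) and `c (k-1) = -∑_{j<k-1} k^j`, a prime `p > (k+1)·k^(k-1)`,
and `q i = (p + c i)/(k·p)`: if `H ⊆ ℚ_{≥0}` is an additive submonoid all of whose
nonzero elements have nonnegative `p`-adic valuation, and `H'` is the submonoid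
generated by `H` and the `q i`, then each `q i` is an atom of `H'`. -/
theorem stmt4 (k : ℕ) (hk : 2 ≤ k) (p : ℕ) (hp : p.Prime)
    (hpk : ((k : ℤ) + 1) * (k : ℤ) ^ (k - 1) < (p : ℤ))
    (c : Fin k → ℤ)
    (hc : ∀ i : Fin k, c i =
      if (i : ℕ) + 1 < k then (k : ℤ) ^ (i : ℕ)
      else -(∑ j ∈ Finset.range (k - 1), (k : ℤ) ^ j))
    (q : Fin k → ℚ) (hq : ∀ i, q i = ((p : ℚ) + (c i : ℚ)) / ((k : ℚ) * (p : ℚ)))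
    (H : AddSubmonoid ℚ) (hpos : ∀ x ∈ H, 0 ≤ x)
    (hval : ∀ x ∈ H, x ≠ 0 → 0 ≤ padicValRat p x)
    (H' : AddSubmonoid ℚ) (hH' : H' = H ⊔ AddSubmonoid.closure (Set.range q)) :
    ∀ i, IsAtomOf H' (q i) := by
  obtain rfl : c = atomCoeff k := funext hc
  subst hH'
  have h3K : 3 * (k : ℤ) ^ (k - 1) < p := by
    have : (3 : ℤ) ≤ k + 1 := by omega
    nlinarith [pow_pos (by omega : (0 : ℤ) < k) (k - 1)]
  exact isAtomOf_sup_closure_range hp (by omega) (atomCoeff_ne_zero hk) (abs_atomCoeff_le hk)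
    (atomCoeff_injective hk) h3K hq hpos hval
end

section
/- Let k ≥ 2 be an integer, let c_i = k^{i−1} for 1 ≤ i ≤ k−1 and c_k = −∑_{i=1}^{k−1} k^{i−1}, let p be a prime with p > (k+1)·k^{k−1}, and set q_i = (p + c_i)/(kp) ∈ ℚ for 1 ≤ i ≤ k. Suppose u, v ∈ ℚ_{≥0} both have nonnegative p-adic valuation, and l_1, …, l_k are nonnegative integers with l_1 + … + l_k > 0 and u = v + ∑_{i=1}^k l_i·q_i. Then either u > 1, or u = 1, v = 0, and l_1 = … = l_k = 1. -/
/-!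
Clearing denominators, `k p u = k p v + L p + S` with `L = ∑ lᵢ` and `S = ∑ lᵢ cᵢ`; since `u` and
`v` are `p`-integral, `p ∣ S`. If `u ≤ 1` then `L p + S ≤ k p`, and `|cᵢ| < k^(k-1)` together with
`p > (k+1) k^(k-1)` forces `L ≤ k` and `|S| < p`, hence `S = 0`. As `∑ cᵢ = 0`, this says
`∑_{i<k-1} (lᵢ - l_k) kⁱ = 0` with digits `|lᵢ - l_k| < k`, so all `lᵢ` are equal, and `L ≤ k`
makes them `1`. Then `L = k`, `S = 0` and `u = v + 1`.
-/

open Finset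

/-- The integers `c` of the statement, indexed from `0`. -/
def digitWeight (k : ℕ) (i : Fin k) : ℤ :=
  if (i : ℕ) + 1 < k then (k : ℤ) ^ (i : ℕ) else -(∑ j ∈ range (k - 1), (k : ℤ) ^ j)

lemma digitWeight_castSucc (n : ℕ) (i : Fin n) :
    digitWeight (n + 1) i.castSucc = ((n : ℤ) + 1) ^ (i : ℕ) := by
  simp [digitWeight]

lemma digitWeight_last (n : ℕ) :
    digitWeight (n + 1) (Fin.last n) = -∑ j ∈ range n, ((n : ℤ) + 1) ^ j := by
  simp [digitWeight]

lemma abs_digitWeight_lt {k : ℕ} (hk : 2 ≤ k) (i : Fin k) :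
    |digitWeight k i| < (k : ℤ) ^ (k - 1) := by
  unfold digitWeight
  split_ifs with hi
  · rw [abs_of_nonneg (by positivity)]
    exact pow_lt_pow_right₀ (by exact_mod_cast hk) (by omega)
  · rw [abs_neg, abs_of_nonneg (by positivity)]
    exact_mod_cast Nat.geomSum_lt hk fun j hj ↦ mem_range.1 hj

lemma abs_sum_mul_digitWeight_le {k : ℕ} (hk : 2 ≤ k) (l : Fin k → ℕ) :
    |∑ i, (l i : ℤ) * digitWeight k i| ≤ (∑ i, l i : ℕ) * (k : ℤ) ^ (k - 1) := by
  refine (abs_sum_le_sum_abs _ _).trans ?_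
  simp only [Nat.cast_sum, sum_mul, abs_mul, Nat.abs_cast]
  exact sum_le_sum fun i _ ↦
    mul_le_mul_of_nonneg_left (abs_digitWeight_lt hk i).le (Nat.cast_nonneg _)

lemma sum_mul_digitWeight (n : ℕ) (l : Fin (n + 1) → ℤ) :
    ∑ i, l i * digitWeight (n + 1) i =
      ∑ i : Fin n, (l i.castSucc - l (Fin.last n)) * ((n : ℤ) + 1) ^ (i : ℕ) := by
  simp only [Fin.sum_univ_castSucc, digitWeight_castSucc, digitWeight_last, sub_mul,
    sum_sub_distrib, ← mul_sum, Fin.sum_univ_eq_sum_range (fun i ↦ ((n : ℤ) + 1) ^ i)]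
  ring

lemma eq_zero_of_sum_mul_pow_eq_zero {b : ℤ} :
    ∀ {n : ℕ} (d : Fin n → ℤ), (∀ i, |d i| < b) → ∑ i, d i * b ^ (i : ℕ) = 0 → ∀ i, d i = 0
  | 0, _, _, _, i => i.elim0
  | n + 1, d, hd, h, i => by
    have hb : b ≠ 0 := ((abs_nonneg _).trans_lt (hd 0)).ne'
    rw [Fin.sum_univ_succ] at h
    simp only [Fin.val_zero, pow_zero, mul_one, Fin.val_succ, pow_succ', mul_left_comm _ b,
      ← mul_sum] at h
    have h0 : d 0 = 0 := Int.eq_zero_of_abs_lt_dvd ⟨-∑ i : Fin n, d i.succ * b ^ (i : ℕ),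
      by linarith⟩ (hd 0)
    rw [h0, zero_add, mul_eq_zero, or_iff_right hb] at h
    exact Fin.cases h0 (eq_zero_of_sum_mul_pow_eq_zero _ (fun i ↦ hd i.succ) h) i

lemma eq_one_of_sum_mul_digitWeight_eq_zero {k : ℕ} (hk : 2 ≤ k) (l : Fin k → ℕ)
    (hL : ∑ i, l i ≤ k) (hL₀ : 0 < ∑ i, l i) (h : ∑ i, (l i : ℤ) * digitWeight k i = 0) :
    ∀ i, l i = 1 := by
  obtain ⟨n, rfl⟩ := Nat.exists_eq_add_one_of_ne_zero (by omega : k ≠ 0)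
  rw [sum_mul_digitWeight] at h
  set m := l (Fin.last n) with hm_def
  clear_value m
  have hsplit : ∑ i, l i = ∑ i : Fin n, l i.castSucc + m := hm_def ▸ Fin.sum_univ_castSucc _
  have hle : ∀ i : Fin n, l i.castSucc + m ≤ n + 1 := fun i ↦ by
    have := single_le_sum (fun j _ ↦ Nat.zero_le (l (Fin.castSucc j))) (mem_univ i)
    omega
  -- `0 < m < n + 1` puts the digits `l i - m` strictly between `-(n + 1)` and `n + 1`.
  have hm₀ : m ≠ 0 := by
    intro hm
    simp only [hm, Nat.cast_zero, sub_zero] at h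
    have hzero := (sum_eq_zero_iff_of_nonneg fun i _ ↦ by positivity).1 h
    have : ∑ i : Fin n, l i.castSucc = 0 := sum_eq_zero fun i hi ↦ by
      simpa [pow_ne_zero, show (n : ℤ) + 1 ≠ 0 by omega] using hzero i hi
    omega
  have hmk : m ≠ n + 1 := by
    intro hm
    have hzero : ∀ i : Fin n, l i.castSucc = 0 := fun i ↦ by have := hle i; omega
    simp only [hzero, hm, Nat.cast_zero, zero_sub, Nat.cast_add, Nat.cast_one] at h
    have : ∑ i : Fin n, -((n : ℤ) + 1) * ((n : ℤ) + 1) ^ (i : ℕ) < 0 :=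
      sum_neg (fun i _ ↦ by nlinarith [pow_pos (by positivity : (0 : ℤ) < n + 1) (i : ℕ)])
        ⟨⟨0, by omega⟩, mem_univ _⟩
    omega
  have hdigits : ∀ i : Fin n, l i.castSucc = m := fun i ↦ by
    have := eq_zero_of_sum_mul_pow_eq_zero _ (fun i ↦ abs_sub_lt_iff.2
      ⟨by have := hle i; omega, by have := hle i; omega⟩) h i
    omega
  have hm : m = 1 := by
    simp only [hsplit, hdigits, sum_const, card_univ, Fintype.card_fin, smul_eq_mul] at hL
    nlinarith [Nat.pos_of_ne_zero hm₀]
  exact Fin.lastCases (hm_def ▸ hm) (fun i ↦ (hdigits i).trans hm)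

lemma le_and_abs_lt_of_mul_add_le {k p L M S : ℤ} (hk : 0 ≤ k) (hM : 0 ≤ M)
    (hp : (k + 1) * M < p) (hS : |S| ≤ L * M) (h : L * p + S ≤ k * p) : L ≤ k ∧ |S| < p := by
  have hSlo := neg_abs_le S
  have hLk : L ≤ k := by
    by_contra! hkL
    have : (k + 1) * (p - M) ≤ L * (p - M) := mul_le_mul_of_nonneg_right hkL (by nlinarith)
    nlinarith
  exact ⟨hLk, by nlinarith⟩

lemma padicNorm_le_one_of_padicValRat_nonneg {p : ℕ} [Fact p.Prime] {x : ℚ}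
    (hx : x ≠ 0 → 0 ≤ padicValRat p x) : padicNorm p x ≤ 1 := by
  rcases eq_or_ne x 0 with rfl | hx₀
  · simp
  · rw [padicNorm.eq_zpow_of_nonzero hx₀]
    exact zpow_le_one_of_nonpos₀ (mod_cast (Fact.out : p.Prime).one_le) (neg_nonpos.2 (hx hx₀))

lemma padicNorm_natCast_mul_sub_sub_le_one {p : ℕ} [Fact p.Prime] (k L : ℕ) {u v : ℚ}
    (hu : padicNorm p u ≤ 1) (hv : padicNorm p v ≤ 1) : padicNorm p (k * (u - v) - L) ≤ 1 := by
  refine padicNorm.sub.trans (max_le ?_ (padicNorm.of_nat L))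
  rw [padicNorm.mul]
  exact mul_le_one₀ (padicNorm.of_nat k) (padicNorm.nonneg _) (padicNorm.sub.trans (max_le hu hv))

lemma dvd_of_intCast_eq_mul_of_padicNorm_le_one {p : ℕ} [Fact p.Prime] {S : ℤ} {x : ℚ}
    (hx : padicNorm p x ≤ 1) (h : (S : ℚ) = p * x) : (p : ℤ) ∣ S := by
  rw [← padicNorm.int_lt_one_iff, h, padicNorm.mul]
  exact mul_lt_one_of_nonneg_of_lt_one_left (padicNorm.nonneg _)
    padicNorm.padicNorm_p_lt_one_of_prime hx

lemma sum_mul_add_div {K ι : Type*} [Field K] (s : Finset ι) (l c : ι → K) (a d : K) :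
    ∑ i ∈ s, l i * ((a + c i) / d) = ((∑ i ∈ s, l i) * a + ∑ i ∈ s, l i * c i) / d := by
  simp only [mul_div_assoc', ← sum_div, mul_add, sum_add_distrib, sum_mul]

theorem stmt5_general (k : ℕ) (hk : 2 ≤ k) (p : ℕ) (hp : p.Prime)
    (hpk : ((k : ℤ) + 1) * (k : ℤ) ^ (k - 1) < (p : ℤ))
    (c : Fin k → ℤ)
    (hc : ∀ i : Fin k, c i =
      if (i : ℕ) + 1 < k then (k : ℤ) ^ (i : ℕ)
      else -(∑ j ∈ Finset.range (k - 1), (k : ℤ) ^ j))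
    (q : Fin k → ℚ) (hq : ∀ i, q i = ((p : ℚ) + (c i : ℚ)) / ((k : ℚ) * (p : ℚ)))
    (u v : ℚ) (hv : 0 ≤ v)
    (hu' : u ≠ 0 → 0 ≤ padicValRat p u) (hv' : v ≠ 0 → 0 ≤ padicValRat p v)
    (l : Fin k → ℕ) (hl : 0 < ∑ i, l i)
    (heq : u = v + ∑ i, (l i : ℚ) * q i) :
    1 < u ∨ (u = 1 ∧ v = 0 ∧ ∀ i, l i = 1) := by
  obtain rfl : c = digitWeight k := funext hc
  have : Fact p.Prime := ⟨hp⟩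
  set L := ∑ i, l i
  set S := ∑ i, (l i : ℤ) * digitWeight k i
  have hkp : 0 < (k : ℚ) * p := mul_pos (by positivity) (mod_cast hp.pos)
  have hcleared : (k : ℚ) * p * u = k * p * v + L * p + S := by
    simp only [heq, hq, sum_mul_add_div, mul_add, mul_div_cancel₀ _ hkp.ne', L, S]
    push_cast
    ring
  have hdvd : (p : ℤ) ∣ S :=
    dvd_of_intCast_eq_mul_of_padicNorm_le_one (padicNorm_natCast_mul_sub_sub_le_one k L
      (padicNorm_le_one_of_padicValRat_nonneg hu') (padicNorm_le_one_of_padicValRat_nonneg hv'))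
      (by linear_combination -hcleared)
  refine (lt_or_ge 1 u).imp id fun hu₁ ↦ ?_
  have hbound : L * (p : ℤ) + S ≤ k * p := by
    have : (L : ℚ) * p + S ≤ k * p := by
      nlinarith [mul_nonneg hkp.le hv, mul_le_mul_of_nonneg_left hu₁ hkp.le]
    exact_mod_cast this
  obtain ⟨hLk, hSp⟩ := le_and_abs_lt_of_mul_add_le (Nat.cast_nonneg k) (by positivity) hpk
    (abs_sum_mul_digitWeight_le hk l) hbound
  have hS : S = 0 := Int.eq_zero_of_abs_lt_dvd hdvd hSp
  have hl₁ := eq_one_of_sum_mul_digitWeight_eq_zero hk l (mod_cast hLk) hl hS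
  have hL : L = k := by simp [L, hl₁]
  have huv : u = v + 1 := by
    rw [hS, hL] at hcleared
    exact mul_left_cancel₀ hkp.ne' (by push_cast at hcleared; linear_combination hcleared)
  exact ⟨by linarith, by linarith, hl₁⟩

/-- With `k ≥ 2`, the explicit integers `c i = k^i` (for `i + 1 < k`,
indexing from `0`) and `c (k-1) = -∑_{j<k-1} k^j`, a prime `p > (k+1)·k^(k-1)`,
and `q i = (p + c i)/(k·p)`: if `u, v ∈ ℚ_{≥0}` both have nonnegative `p`-adic
valuation (when nonzero), and `l 1, …, l k` are nonnegative integers, not all zero,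
with `u = v + ∑ l i · q i`, then either `u > 1`, or `u = 1`, `v = 0` and all `l i = 1`. -/
theorem stmt5 (k : ℕ) (hk : 2 ≤ k) (p : ℕ) (hp : p.Prime)
    (hpk : ((k : ℤ) + 1) * (k : ℤ) ^ (k - 1) < (p : ℤ))
    (c : Fin k → ℤ)
    (hc : ∀ i : Fin k, c i =
      if (i : ℕ) + 1 < k then (k : ℤ) ^ (i : ℕ)
      else -(∑ j ∈ Finset.range (k - 1), (k : ℤ) ^ j))
    (q : Fin k → ℚ) (hq : ∀ i, q i = ((p : ℚ) + (c i : ℚ)) / ((k : ℚ) * (p : ℚ)))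
    (u v : ℚ) (hu : 0 ≤ u) (hv : 0 ≤ v)
    (hu' : u ≠ 0 → 0 ≤ padicValRat p u) (hv' : v ≠ 0 → 0 ≤ padicValRat p v)
    (l : Fin k → ℕ) (hl : 0 < ∑ i, l i)
    (heq : u = v + ∑ i, (l i : ℚ) * q i) :
    1 < u ∨ (u = 1 ∧ v = 0 ∧ ∀ i, l i = 1) :=
  stmt5_general k hk p hp hpk c hc q hq u v hv hu' hv' l hl heq
end

section
/- Let L be a finite nonempty set of integers all at least 2, and let f : L → ℕ be a map with f(k) ≥ 1 for every k ∈ L. Then there exist a numerical monoid H and a squarefree element a ∈ H such that the set of lengths of a in H equals L and, for every k ∈ L, the number of factorizations of a in H of length k equals f(k). -/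
/-!
Take a base `q` larger than every length involved, a unit `u`, a power of `q` exceeding every
`q`-ary numeral used, and `a = q * u`. Give each prescribed factorization `p` its own set `I p`
of `ℓ p - 1` exponents and let it consist of the medium atoms `u + q ^ i`, `i ∈ I p`, and one
large atom `a - ∑ i ∈ I p, (u + q ^ i)`. In the monoid generated by these atoms and all integers
above `a`, the factorizations of `a` are the multisets of these atoms with sum `a`. Such a
multiset contains a large atom, since medium atoms alone give too small a multiple of `u`, and
only one, since two large atoms exceed `a`. Comparing quotient and remainder modulo `u` then
fixes the number of medium atoms and the `q`-ary numeral formed by their exponents, hence the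
exponents themselves. Disjointness of the exponent sets keeps the prescribed factorizations
apart and prevents a large atom from being a sum of other atoms.
-/

/-- A numerical monoid: an additive submonoid of `ℕ` with finite complement. -/
def IsNumericalMonoid (H : AddSubmonoid ℕ) : Prop :=
  ((H : Set ℕ)ᶜ).Finite

/-- `u` is an atom of the additive submonoid `H` of `ℕ`: it is a nonzero element of `H`
that is not the sum of two nonzero elements of `H`. -/
def IsAtomOfN (H : AddSubmonoid ℕ) (u : ℕ) : Prop :=
  u ∈ H ∧ u ≠ 0 ∧ ∀ v ∈ H, ∀ w ∈ H, v ≠ 0 → w ≠ 0 → u ≠ v + w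

/-- `z` is a factorization of `a` in `H`: a multiset of atoms of `H` with sum `a`. -/
def IsFactorizationOfN (H : AddSubmonoid ℕ) (a : ℕ) (z : Multiset ℕ) : Prop :=
  (∀ x ∈ z, IsAtomOfN H x) ∧ z.sum = a

def IsSquarefreeIn (H : AddSubmonoid ℕ) (a : ℕ) : Prop :=
  ¬ ∃ b ∈ H, ∃ c ∈ H, b ≠ 0 ∧ c ≠ 0 ∧ a = b + b + c

theorem IsFactorizationOfN.mem {H : AddSubmonoid ℕ} {a : ℕ} {z : Multiset ℕ}
    (hz : IsFactorizationOfN H a z) : a ∈ H :=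
  hz.2 ▸ AddSubmonoid.multiset_sum_mem _ _ fun x hx => (hz.1 x hx).1

def closureAbove (A : Set ℕ) (a : ℕ) : AddSubmonoid ℕ :=
  AddSubmonoid.closure (A ∪ Set.Ici (a + 1))

def SumIndecomposable (A : Set ℕ) : Prop :=
  ∀ x ∈ A, ∀ z : Multiset ℕ, (∀ y ∈ z, y ∈ A) → z.sum = x → Multiset.card z ≤ 1

section ClosureAbove

variable {A : Set ℕ} {a : ℕ}

theorem isNumericalMonoid_closureAbove : IsNumericalMonoid (closureAbove A a) :=
  (Set.finite_Iic a).subset fun x hx => by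
    by_contra hxa
    exact hx (AddSubmonoid.subset_closure (Or.inr (by simpa using hxa)))

theorem mem_closureAbove_of_mem {x : ℕ} (hx : x ∈ A) : x ∈ closureAbove A a :=
  AddSubmonoid.subset_closure (Or.inl hx)

theorem exists_multiset_of_mem_closureAbove {x : ℕ} (hx : x ∈ closureAbove A a)
    (hxa : x ≤ a) :
    ∃ z : Multiset ℕ, (∀ y ∈ z, y ∈ A) ∧ z.sum = x := by
  obtain ⟨z, hz, rfl⟩ := AddSubmonoid.exists_multiset_of_mem_closure hx
  refine ⟨z, fun y hy => (hz y hy).resolve_right fun hya => ?_, rfl⟩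
  have := Multiset.le_sum_of_mem hy
  simp only [Set.mem_Ici] at hya
  omega

theorem mem_of_isAtomOfN_closureAbove (hA : 0 ∉ A) {x : ℕ}
    (hx : IsAtomOfN (closureAbove A a) x) (hxa : x ≤ a) : x ∈ A := by
  obtain ⟨hxH, hx0, hirr⟩ := hx
  obtain ⟨z, hz, rfl⟩ := exists_multiset_of_mem_closureAbove hxH hxa
  obtain ⟨y, hy⟩ := Multiset.exists_mem_of_ne_zero (s := z) (by rintro rfl; exact hx0 rfl)
  obtain ⟨t, rfl⟩ := Multiset.exists_cons_of_mem hy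
  rcases t.empty_or_exists_mem with rfl | ⟨y', hy'⟩
  · simpa using hz y hy
  have hy0 : y ≠ 0 := ne_of_mem_of_not_mem (hz y hy) hA
  have ht0 : t.sum ≠ 0 := fun ht =>
    hA (Multiset.sum_eq_zero_iff.1 ht y' hy' ▸ hz y' (Multiset.mem_cons_of_mem hy'))
  have htH : t.sum ∈ closureAbove A a := AddSubmonoid.multiset_sum_mem _ _ fun x hx =>
    mem_closureAbove_of_mem (hz x (Multiset.mem_cons_of_mem hx))
  exact (hirr y (mem_closureAbove_of_mem (hz y hy)) t.sum htH hy0 ht0 (Multiset.sum_cons y t)).elim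

theorem isAtomOfN_closureAbove (hA : 0 ∉ A) (hA' : SumIndecomposable A) {x : ℕ} (hx : x ∈ A)
    (hxa : x ≤ a) : IsAtomOfN (closureAbove A a) x := by
  refine ⟨mem_closureAbove_of_mem hx, ne_of_mem_of_not_mem hx hA, ?_⟩
  rintro v hv w hw hv0 hw0 rfl
  obtain ⟨zv, hzv, rfl⟩ := exists_multiset_of_mem_closureAbove hv (by omega)
  obtain ⟨zw, hzw, rfl⟩ := exists_multiset_of_mem_closureAbove hw (by omega)
  have hcard := hA' _ hx (zv + zw) (by simpa [or_imp, forall_and] using ⟨hzv, hzw⟩)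
    (Multiset.sum_add _ _)
  have hzv0 : 0 < Multiset.card zv := Multiset.card_pos.2 (by rintro rfl; exact hv0 rfl)
  have hzw0 : 0 < Multiset.card zw := Multiset.card_pos.2 (by rintro rfl; exact hw0 rfl)
  rw [Multiset.card_add] at hcard
  omega

theorem isFactorizationOfN_closureAbove_iff (hA : 0 ∉ A) (hA' : SumIndecomposable A) {b : ℕ}
    (hb : b ≤ a) {z : Multiset ℕ} :
    IsFactorizationOfN (closureAbove A a) b z ↔ (∀ y ∈ z, y ∈ A) ∧ z.sum = b := by
  constructor
  · rintro ⟨hz, rfl⟩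
    exact ⟨fun y hy => mem_of_isAtomOfN_closureAbove hA (hz y hy)
      ((Multiset.le_sum_of_mem hy).trans hb), rfl⟩
  · rintro ⟨hz, rfl⟩
    exact ⟨fun y hy => isAtomOfN_closureAbove hA hA' (hz y hy)
      ((Multiset.le_sum_of_mem hy).trans hb), rfl⟩

theorem isSquarefreeIn_closureAbove
    (ha : ∀ z : Multiset ℕ, (∀ y ∈ z, y ∈ A) → z.sum = a → z.Nodup) :
    IsSquarefreeIn (closureAbove A a) a := by
  rintro ⟨b, hb, c, hc, hb0, -, hbc⟩
  obtain ⟨zb, hzb, rfl⟩ := exists_multiset_of_mem_closureAbove hb (by omega)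
  obtain ⟨zc, hzc, rfl⟩ := exists_multiset_of_mem_closureAbove hc (by omega)
  obtain ⟨y, hy⟩ := Multiset.exists_mem_of_ne_zero (s := zb) (by rintro rfl; exact hb0 rfl)
  have hnodup := ha (zb + zb + zc) (by simpa [or_imp, forall_and] using ⟨hzb, hzc⟩)
    (by simp only [Multiset.sum_add, hbc])
  exact Multiset.disjoint_left.1 (Multiset.nodup_add.1 (Multiset.nodup_add.1 hnodup).1).2.2 hy hy

end ClosureAbove

theorem Nat.ofDigits_map_range (b : ℕ) (c : ℕ → ℕ) (m : ℕ) :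
    Nat.ofDigits b ((List.range m).map c) = ∑ i ∈ Finset.range m, c i * b ^ i := by
  induction m with
  | zero => rfl
  | succ m ih =>
    simp [List.range_succ, Nat.ofDigits_append, ih, Finset.sum_range_succ, mul_comm]

theorem Multiset.sum_map_pow_eq_sum_count (b : ℕ) {w : Multiset ℕ} {m : ℕ}
    (hw : ∀ x ∈ w, x < m) :
    (w.map (b ^ ·)).sum = ∑ i ∈ Finset.range m, w.count i * b ^ i := by
  rw [Finset.sum_multiset_map_count]
  refine Finset.sum_subset (fun x hx => Finset.mem_range.2 (hw x (by simpa using hx))) ?_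
  intro x _ hx
  simp [Multiset.count_eq_zero.2 (by simpa using hx)]

theorem Multiset.eq_of_sum_map_pow_eq {b : ℕ} (hb : 1 < b) {w v : Multiset ℕ}
    (hw : ∀ i, w.count i < b) (hv : ∀ i, v.count i < b)
    (h : (w.map (b ^ ·)).sum = (v.map (b ^ ·)).sum) : w = v := by
  ext i
  set m := w.sum + v.sum + i + 1
  have hwm : ∀ x ∈ w, x < m := fun x hx => by have := Multiset.le_sum_of_mem hx; omega
  have hvm : ∀ x ∈ v, x < m := fun x hx => by have := Multiset.le_sum_of_mem hx; omega
  rw [sum_map_pow_eq_sum_count b hwm, sum_map_pow_eq_sum_count b hvm,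
    ← Nat.ofDigits_map_range, ← Nat.ofDigits_map_range] at h
  have := Nat.ofDigits_inj_of_len_eq hb (by simp) (by simpa using fun _ _ => hw _)
    (by simpa using fun _ _ => hv _) h
  exact List.map_inj_left.1 this i (List.mem_range.2 (by omega))

theorem Multiset.exists_eq_map_of_forall_mem {α β : Type*} {f : α → β} {q : α → Prop}
    {z : Multiset β} (hz : ∀ x ∈ z, ∃ i, q i ∧ x = f i) :
    ∃ w : Multiset α, (∀ i ∈ w, q i) ∧ z = w.map f := by
  induction z using Multiset.induction_on with
  | empty => exact ⟨0, by simp, rfl⟩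
  | cons x z ih =>
    obtain ⟨w, hw, rfl⟩ := ih fun y hy => hz y (Multiset.mem_cons_of_mem hy)
    obtain ⟨i, hi, rfl⟩ := hz x (Multiset.mem_cons_self _ _)
    exact ⟨i ::ₘ w, Multiset.forall_mem_cons.2 ⟨hi, hw⟩, (Multiset.map_cons f i w).symm⟩

namespace FactorizationRealization

variable {ι : Type*} (P : Finset ι) (I : ι → Finset ℕ)

def maxCard : ℕ := P.sup fun p => (I p).card

def base : ℕ := 2 * maxCard P I + 4

def expBound : ℕ := (P.sup fun p => (I p).sup id) + 1

def unit : ℕ := base P I ^ (expBound P I + 1)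

def target : ℕ := base P I * unit P I

def medium (i : ℕ) : ℕ := unit P I + base P I ^ i

def powSum (p : ι) : ℕ := ((I p).val.map (base P I ^ ·)).sum

def large (p : ι) : ℕ := target P I - ((I p).card * unit P I + powSum P I p)

def designated (p : ι) : Multiset ℕ := large P I p ::ₘ (I p).val.map (medium P I)

def atoms : Set ℕ := {x | ∃ p ∈ P, x ∈ designated P I p}

variable {P I} {p : ι}

theorem one_lt_base : 1 < base P I := by unfold base; omega

theorem base_pos : 0 < base P I := one_lt_base.le

theorem card_le_maxCard (hp : p ∈ P) : (I p).card ≤ maxCard P I :=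
  Finset.le_sup (f := fun p => (I p).card) hp

theorem lt_expBound (hp : p ∈ P) {i : ℕ} (hi : i ∈ I p) : i < expBound P I :=
  Nat.lt_succ_of_le <|
    (Finset.le_sup (f := id) hi).trans (Finset.le_sup (f := fun p => (I p).sup id) hp)

theorem sum_map_pow_lt_unit {w : Multiset ℕ} (hw : ∀ i ∈ w, i < expBound P I)
    (hcard : Multiset.card w < base P I) : (w.map (base P I ^ ·)).sum < unit P I :=
  calc (w.map (base P I ^ ·)).sum
      ≤ Multiset.card w * base P I ^ expBound P I := by
        have := Multiset.sum_le_card_nsmul (w.map (base P I ^ ·)) _ fun x hx => by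
          obtain ⟨i, hi, rfl⟩ := Multiset.mem_map.1 hx
          exact Nat.pow_le_pow_right base_pos (hw i hi).le
        rwa [Multiset.card_map, smul_eq_mul] at this
    _ < base P I * base P I ^ expBound P I :=
        Nat.mul_lt_mul_of_pos_right hcard (pow_pos base_pos _)
    _ = unit P I := (pow_succ' _ _).symm

theorem powSum_lt_unit (hp : p ∈ P) : powSum P I p < unit P I :=
  sum_map_pow_lt_unit (fun _ hi => lt_expBound hp hi) <| by
    have := card_le_maxCard (I := I) hp; simp only [Finset.card_val, base]; omega

theorem sum_map_medium (w : Multiset ℕ) :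
    (w.map (medium P I)).sum = Multiset.card w * unit P I + (w.map (base P I ^ ·)).sum := by
  unfold medium
  rw [Multiset.sum_map_add]
  simp

theorem large_add (hp : p ∈ P) :
    large P I p + ((I p).card * unit P I + powSum P I p) = target P I := by
  have := card_le_maxCard (I := I) hp
  have := powSum_lt_unit (I := I) hp
  have : (I p).card * unit P I ≤ maxCard P I * unit P I := Nat.mul_le_mul_right _ ‹_›
  have : target P I = 2 * (maxCard P I * unit P I) + 4 * unit P I := by
    unfold target base; ring
  unfold large; omega

theorem lt_large (hp : p ∈ P) : (maxCard P I + 3) * unit P I < large P I p := by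
  have := large_add (I := I) hp
  have := powSum_lt_unit (I := I) hp
  have : (I p).card * unit P I ≤ maxCard P I * unit P I :=
    Nat.mul_le_mul_right _ (card_le_maxCard hp)
  have : target P I = 2 * (maxCard P I * unit P I) + 4 * unit P I := by
    unfold target base; ring
  nlinarith

theorem target_lt_large_add_large {p' : ι} (hp : p ∈ P) (hp' : p' ∈ P) :
    target P I < large P I p + large P I p' := by
  have := lt_large (I := I) hp
  have := lt_large (I := I) hp'
  have : target P I = 2 * (maxCard P I * unit P I) + 4 * unit P I := by
    unfold target base; ring
  nlinarith

theorem unit_lt_medium (i : ℕ) : unit P I < medium P I i :=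
  Nat.lt_add_of_pos_right (pow_pos base_pos _)

theorem medium_lt_two_mul_unit {i : ℕ} (hi : i < expBound P I) : medium P I i < 2 * unit P I := by
  have := sum_map_pow_lt_unit (w := {i}) (by simpa using hi) (by simpa using one_lt_base)
  simp only [Multiset.map_singleton, Multiset.sum_singleton] at this
  unfold medium
  omega

theorem medium_lt_large (hp : p ∈ P) {i : ℕ} (hi : i < expBound P I) :
    medium P I i < large P I p := by
  have := lt_large (I := I) hp
  nlinarith [medium_lt_two_mul_unit (P := P) (I := I) hi]

theorem medium_injective : Function.Injective (medium P I) := fun _ _ h =>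
  Nat.pow_right_injective one_lt_base (Nat.add_left_cancel h)

theorem sum_designated (hp : p ∈ P) : (designated P I p).sum = target P I := by
  rw [designated, Multiset.sum_cons, sum_map_medium, Finset.card_val]
  exact large_add hp

theorem card_designated : Multiset.card (designated P I p) = (I p).card + 1 := by
  simp [designated]

theorem nodup_designated (hp : p ∈ P) : (designated P I p).Nodup := by
  refine Multiset.nodup_cons.2 ⟨fun h => ?_, (I p).nodup.map medium_injective⟩
  obtain ⟨i, hi, heq⟩ := Multiset.mem_map.1 h
  exact (medium_lt_large hp (lt_expBound hp hi)).ne heq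

theorem mem_atoms {x : ℕ} (hx : x ∈ atoms P I) :
    (∃ p ∈ P, x = large P I p) ∨ ∃ i < expBound P I, x = medium P I i := by
  obtain ⟨p, hp, hx⟩ := hx
  rcases Multiset.mem_cons.1 hx with rfl | hx
  · exact Or.inl ⟨p, hp, rfl⟩
  · obtain ⟨i, hi, rfl⟩ := Multiset.mem_map.1 hx
    exact Or.inr ⟨i, lt_expBound hp hi, rfl⟩

theorem unit_lt_of_mem_atoms {x : ℕ} (hx : x ∈ atoms P I) : unit P I < x := by
  rcases mem_atoms hx with ⟨p, hp, rfl⟩ | ⟨i, hi, rfl⟩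
  · exact (unit_lt_medium 0).trans (medium_lt_large hp (Nat.succ_pos _))
  · exact unit_lt_medium i

theorem card_lt_base {z : Multiset ℕ} (hz : ∀ x ∈ z, x ∈ atoms P I)
    (hsum : z.sum ≤ target P I) :
    Multiset.card z < base P I := by
  have := Multiset.card_nsmul_le_sum fun x hx => unit_lt_of_mem_atoms (hz x hx)
  rw [smul_eq_mul] at this
  have : Multiset.card z * (unit P I + 1) < base P I * (unit P I + 1) := by
    unfold target at hsum; nlinarith [base_pos (P := P) (I := I)]
  exact Nat.lt_of_mul_lt_mul_right this

theorem sum_map_medium_ne_target {w : Multiset ℕ} (hw : ∀ i ∈ w, i < expBound P I)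
    (hcard : Multiset.card w < base P I) : (w.map (medium P I)).sum ≠ target P I := by
  have := sum_map_pow_lt_unit hw hcard
  have : (Multiset.card w + 1) * unit P I ≤ base P I * unit P I := Nat.mul_le_mul_right _ hcard
  rw [sum_map_medium, target]
  nlinarith

theorem eq_val_of_large_add_sum_map_medium (hp : p ∈ P) {w : Multiset ℕ}
    (hw : ∀ i ∈ w, i < expBound P I) (hcard : Multiset.card w < base P I)
    (h : large P I p + (w.map (medium P I)).sum = target P I) : w = (I p).val := by
  rw [← large_add hp, sum_map_medium] at h
  have h := congrArg (· % unit P I) (Nat.add_left_cancel h)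
  simp only [Nat.mul_add_mod_of_lt (sum_map_pow_lt_unit hw hcard),
    Nat.mul_add_mod_of_lt (powSum_lt_unit hp)] at h
  refine Multiset.eq_of_sum_map_pow_eq one_lt_base (fun i => ?_) (fun i => ?_) h
  · exact (Multiset.count_le_card i w).trans_lt hcard
  · exact (Multiset.nodup_iff_count_le_one.1 (I p).nodup i).trans_lt one_lt_base

theorem exists_eq_designated {z : Multiset ℕ} (hz : ∀ x ∈ z, x ∈ atoms P I)
    (hsum : z.sum = target P I) : ∃ p ∈ P, z = designated P I p := by
  have hcard := card_lt_base hz hsum.le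
  obtain ⟨p, hp, hpz⟩ : ∃ p ∈ P, large P I p ∈ z := by
    by_contra! hno
    obtain ⟨w, hw, rfl⟩ := Multiset.exists_eq_map_of_forall_mem fun x hx =>
      (mem_atoms (hz x hx)).resolve_left fun ⟨p, hp, hxp⟩ => hno p hp (hxp ▸ hx)
    rw [Multiset.card_map] at hcard
    exact sum_map_medium_ne_target hw hcard hsum
  obtain ⟨z, rfl⟩ := Multiset.exists_cons_of_mem hpz
  rw [Multiset.sum_cons] at hsum
  obtain ⟨w, hw, rfl⟩ := Multiset.exists_eq_map_of_forall_mem fun x hx =>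
    (mem_atoms (hz x (Multiset.mem_cons_of_mem hx))).resolve_left fun ⟨p', hp', hxp'⟩ => by
      have := Multiset.le_sum_of_mem hx
      have := target_lt_large_add_large (I := I) hp hp'
      omega
  rw [Multiset.card_cons, Multiset.card_map] at hcard
  rw [eq_val_of_large_add_sum_map_medium hp hw (by omega) hsum]
  exact ⟨p, hp, rfl⟩

theorem isSquarefreeIn_target :
    IsSquarefreeIn (closureAbove (atoms P I) (target P I)) (target P I) :=
  isSquarefreeIn_closureAbove fun _ hz hsum => by
    obtain ⟨p, hp, rfl⟩ := exists_eq_designated hz hsum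
    exact nodup_designated hp

theorem eq_of_medium_mem_designated (hdisj : (P : Set ι).PairwiseDisjoint I) {p' : ι}
    (hp : p ∈ P) (hp' : p' ∈ P) {i : ℕ} (hi : i ∈ I p)
    (h : medium P I i ∈ designated P I p') : p = p' := by
  rcases Multiset.mem_cons.1 h with h | h
  · exact absurd h (medium_lt_large hp' (lt_expBound hp hi)).ne
  · obtain ⟨j, hj, hji⟩ := Multiset.mem_map.1 h
    by_contra hpp'
    exact Finset.disjoint_left.1 (hdisj hp hp' hpp') hi (medium_injective hji ▸ hj)

theorem injOn_designated (hdisj : (P : Set ι).PairwiseDisjoint I)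
    (hne : ∀ p ∈ P, (I p).Nonempty) : Set.InjOn (designated P I) P := fun p hp p' hp' h => by
  obtain ⟨i, hi⟩ := hne p hp
  exact eq_of_medium_mem_designated hdisj hp hp' hi
    (h ▸ Multiset.mem_cons_of_mem (Multiset.mem_map_of_mem _ hi))

theorem card_le_one_of_sum_mem_atoms (hdisj : (P : Set ι).PairwiseDisjoint I)
    (hne : ∀ p ∈ P, (I p).Nonempty) {x : ℕ} (hx : x ∈ atoms P I) {z : Multiset ℕ}
    (hz : ∀ y ∈ z, y ∈ atoms P I) (hsum : z.sum = x) : Multiset.card z ≤ 1 := by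
  by_contra! hcard
  rcases mem_atoms hx with ⟨p, hp, rfl⟩ | ⟨i, hi, rfl⟩
  · obtain ⟨p', hp', hz'⟩ := exists_eq_designated (z := z + (I p).val.map (medium P I))
      (by
        simp only [Multiset.mem_add, Multiset.mem_map]
        rintro y (hy | ⟨i, hi, rfl⟩)
        exacts [hz y hy, ⟨p, hp, Multiset.mem_cons_of_mem (Multiset.mem_map_of_mem _ hi)⟩])
      (by rw [Multiset.sum_add, hsum, sum_map_medium, Finset.card_val]; exact large_add hp)
    obtain ⟨i, hi⟩ := hne p hp
    obtain rfl := eq_of_medium_mem_designated hdisj hp hp' hi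
      (hz' ▸ Multiset.mem_add.2 (Or.inr (Multiset.mem_map_of_mem _ hi)))
    have := congrArg Multiset.card hz'
    simp only [Multiset.card_add, Multiset.card_map, Finset.card_val, card_designated] at this
    omega
  · have := Multiset.card_nsmul_le_sum fun y hy => unit_lt_of_mem_atoms (hz y hy)
    rw [smul_eq_mul] at this
    nlinarith [medium_lt_two_mul_unit (P := P) (I := I) hi]

theorem isFactorizationOfN_target_iff (hdisj : (P : Set ι).PairwiseDisjoint I)
    (hne : ∀ p ∈ P, (I p).Nonempty) {z : Multiset ℕ} :
    IsFactorizationOfN (closureAbove (atoms P I) (target P I)) (target P I) z ↔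
      ∃ p ∈ P, designated P I p = z := by
  rw [isFactorizationOfN_closureAbove_iff (fun h => Nat.not_lt_zero _ (unit_lt_of_mem_atoms h))
    (fun _ hx _ hz hsum => card_le_one_of_sum_mem_atoms hdisj hne hx hz hsum) le_rfl]
  constructor
  · rintro ⟨hz, hsum⟩
    obtain ⟨p, hp, rfl⟩ := exists_eq_designated hz hsum
    exact ⟨p, hp, rfl⟩
  · rintro ⟨p, hp, rfl⟩
    exact ⟨fun x hx => ⟨p, hp, hx⟩, sum_designated hp⟩

end FactorizationRealization

open FactorizationRealization in
theorem exists_isNumericalMonoid_isFactorizationOfN_iff {ι : Type*} [Encodable ι] (P : Finset ι)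
    (ℓ : ι → ℕ) (hℓ : ∀ p ∈ P, 2 ≤ ℓ p) :
    ∃ H : AddSubmonoid ℕ, IsNumericalMonoid H ∧ ∃ a : ℕ, IsSquarefreeIn H a ∧
      ∃ Z : ι → Multiset ℕ, Set.InjOn Z P ∧ (∀ p ∈ P, Multiset.card (Z p) = ℓ p) ∧
        ∀ z, IsFactorizationOfN H a z ↔ ∃ p ∈ P, Z p = z := by
  set I : ι → Finset ℕ := fun p =>
    (Finset.range (ℓ p - 1)).image (Nat.pair (Encodable.encode p))
  have hdisj : (P : Set ι).PairwiseDisjoint I := fun p _ p' _ hne => by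
    simp only [Function.onFun, Finset.disjoint_left, I, Finset.mem_image]
    rintro _ ⟨t, -, rfl⟩ ⟨t', -, h⟩
    exact hne (Encodable.encode_injective (Nat.pair_eq_pair.1 h).1).symm
  have hne : ∀ p ∈ P, (I p).Nonempty := fun p hp =>
    have := hℓ p hp
    ⟨_, Finset.mem_image_of_mem _ (Finset.mem_range.2 (by omega : 0 < ℓ p - 1))⟩
  refine ⟨_, isNumericalMonoid_closureAbove, _, isSquarefreeIn_target, designated P I,
    injOn_designated hdisj hne, fun p hp => ?_, fun _ => isFactorizationOfN_target_iff hdisj hne⟩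
  rw [card_designated, Finset.card_image_of_injective _ fun _ _ h => (Nat.pair_eq_pair.1 h).2,
    Finset.card_range]
  have := hℓ p hp
  omega

theorem setOf_lengths_eq_image {H : AddSubmonoid ℕ} {a : ℕ} {ι : Type*}
    {P : Finset ι} {Z : ι → Multiset ℕ} {ℓ : ι → ℕ}
    (hcard : ∀ p ∈ P, Multiset.card (Z p) = ℓ p)
    (hfact : ∀ z, IsFactorizationOfN H a z ↔ ∃ p ∈ P, Z p = z) :
    {n | ∃ z, IsFactorizationOfN H a z ∧ Multiset.card z = n} = ℓ '' P := by
  ext n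
  simp only [Set.mem_ofPred_eq, hfact, Set.mem_image, Finset.mem_coe]
  constructor
  · rintro ⟨_, ⟨p, hp, rfl⟩, rfl⟩
    exact ⟨p, hp, (hcard p hp).symm⟩
  · rintro ⟨p, hp, rfl⟩
    exact ⟨_, ⟨p, hp, rfl⟩, hcard p hp⟩

theorem ncard_factorizations_of_length {H : AddSubmonoid ℕ} {a : ℕ} {ι : Type*}
    {P : Finset ι} {Z : ι → Multiset ℕ} {ℓ : ι → ℕ} (hZ : Set.InjOn Z P)
    (hcard : ∀ p ∈ P, Multiset.card (Z p) = ℓ p)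
    (hfact : ∀ z, IsFactorizationOfN H a z ↔ ∃ p ∈ P, Z p = z) (k : ℕ) :
    {z | IsFactorizationOfN H a z ∧ Multiset.card z = k}.ncard =
      (P.filter (ℓ · = k)).card := by
  have : {z | IsFactorizationOfN H a z ∧ Multiset.card z = k} =
      Z '' ↑(P.filter (ℓ · = k)) := by
    ext z
    simp only [Set.mem_ofPred_eq, hfact, Set.mem_image, Finset.coe_filter]
    constructor
    · rintro ⟨⟨p, hp, rfl⟩, rfl⟩
      exact ⟨p, ⟨hp, (hcard p hp).symm⟩, rfl⟩
    · rintro ⟨p, ⟨hp, rfl⟩, rfl⟩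
      exact ⟨⟨p, hp, rfl⟩, hcard p hp⟩
  rw [this, (hZ.mono (Finset.coe_subset.2 (Finset.filter_subset _ _))).ncard_image,
    Set.ncard_coe_finset]

def lengthPairs (L : Finset ℕ) (f : ℕ → ℕ) : Finset (ℕ × ℕ) :=
  L.biUnion fun k => (Finset.range (f k)).map (Function.Embedding.sectR k ℕ)

theorem mem_lengthPairs {L : Finset ℕ} {f : ℕ → ℕ} {p : ℕ × ℕ} :
    p ∈ lengthPairs L f ↔ p.1 ∈ L ∧ p.2 < f p.1 := by
  obtain ⟨k, j⟩ := p
  simp [lengthPairs]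

theorem fst_image_lengthPairs {L : Finset ℕ} {f : ℕ → ℕ} (hf : ∀ k ∈ L, 1 ≤ f k) :
    Prod.fst '' (lengthPairs L f : Set (ℕ × ℕ)) = L := by
  ext k
  simpa [mem_lengthPairs] using fun hk => ⟨0, hf k hk⟩

theorem card_filter_fst_lengthPairs {L : Finset ℕ} {f : ℕ → ℕ} {k : ℕ} (hk : k ∈ L) :
    ((lengthPairs L f).filter (·.1 = k)).card = f k := by
  have : (lengthPairs L f).filter (·.1 = k) =
      (Finset.range (f k)).map (Function.Embedding.sectR k ℕ) := by
    ext ⟨k', j⟩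
    simp only [Finset.mem_filter, mem_lengthPairs, Finset.mem_map, Finset.mem_range,
      Function.Embedding.sectR_apply, Prod.mk.injEq]
    constructor
    · rintro ⟨⟨-, hj⟩, rfl⟩
      exact ⟨j, hj, rfl, rfl⟩
    · rintro ⟨j, hj, rfl, rfl⟩
      exact ⟨⟨hk, hj⟩, rfl⟩
  rw [this, Finset.card_map, Finset.card_range]

/-- For every finite nonempty set `L` of integers `≥ 2` and every map
`f : L → ℕ` with `f k ≥ 1` on `L`, there exist a numerical monoid `H` and a squarefree
element `a ∈ H` whose set of lengths equals `L` and which has exactly `f k`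
factorizations of length `k` for every `k ∈ L`. -/
theorem stmt8 (L : Finset ℕ) (hL : L.Nonempty) (hL2 : ∀ k ∈ L, 2 ≤ k)
    (f : ℕ → ℕ) (hf : ∀ k ∈ L, 1 ≤ f k) :
    ∃ H : AddSubmonoid ℕ, IsNumericalMonoid H ∧ ∃ a ∈ H,
      (¬ ∃ b ∈ H, ∃ c ∈ H, b ≠ 0 ∧ c ≠ 0 ∧ a = b + b + c) ∧
      ({n | ∃ z, IsFactorizationOfN H a z ∧ Multiset.card z = n} = ↑L) ∧
      ∀ k ∈ L, {z | IsFactorizationOfN H a z ∧ Multiset.card z = k}.ncard = f k := by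
  obtain ⟨H, hH, a, ha, Z, hZ, hcard, hfact⟩ :=
    exists_isNumericalMonoid_isFactorizationOfN_iff (lengthPairs L f) Prod.fst
      fun p hp => hL2 p.1 (mem_lengthPairs.1 hp).1
  obtain ⟨k₀, hk₀⟩ := hL
  have hfac₀ := (hfact _).2 ⟨(k₀, 0), mem_lengthPairs.2 ⟨hk₀, hf k₀ hk₀⟩, rfl⟩
  refine ⟨H, hH, a, hfac₀.mem, ha, ?_, fun k hk => ?_⟩
  · rw [setOf_lengths_eq_image hcard hfact, fst_image_lengthPairs hf]
  · rw [ncard_factorizations_of_length hZ hcard hfact, card_filter_fst_lengthPairs hk]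
end

section
/- Let f : ℕ_{≥2} → ℕ be a map with finite support that is not identically zero. Then there exists a finitely generated additive submonoid H ⊆ ℚ_{≥0} with ℕ ⊆ H such that every atom of H is strictly less than 1, the element 1 ∈ H is squarefree in H, and for every integer k ≥ 2 the number of factorizations of 1 in H of length k equals f(k). -/
/-!
For every length `k` wanted (with multiplicity `f k`) take a block of `k` rationals `c_i / p`
summing to `1`, where `p` is a prime and `c_i = M + d_i` with `M` large and `d_0 < ⋯ < d_{k-1}`
superincreasing (`d_i ≈ (k + 1) ^ i`). Each `c_i` lies strictly between `p / (k + 1)` and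
`p / (k - 1)`, so a sum of `c_i`'s equal to `p` has exactly `k` terms, and then superincreasingness
forces it to use every `c_i` exactly once. Different blocks have different primes, so in any sum of
generators equal to `1` the terms of each block add up to an integer; by positivity only one block
occurs. Hence the factorizations of `1` are exactly the blocks, every generator is an atom, and `1`
is squarefree.
-/

open Finset Function

theorem Multiset.eq_range_of_sum_map_eq_of_superincreasing {K n : ℕ} {d : ℕ → ℕ}
    (hd : ∀ j < n, K * ∑ i ∈ Finset.range j, d i < d j) {s : Multiset ℕ}
    (hs : ∀ i ∈ s, i < n) (hcard : card s ≤ K)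
    (hsum : (s.map d).sum = ∑ i ∈ Finset.range n, d i) : s = range n := by
  induction n generalizing s with
  | zero => exact eq_zero_of_forall_notMem fun i hi => (hs i hi).not_ge i.zero_le
  | succ n ih =>
    set t := s.filter (· ≠ n)
    have hsplit : s = replicate (s.count n) n + t := by
      rw [← filter_eq', filter_add_not]
    have ht : ∀ i ∈ t, i < n := fun i hi => by
      obtain ⟨his, hin⟩ := mem_filter.1 hi
      have := hs i his
      omega
    have hcount : s.count n + card t ≤ K := by
      rwa [hsplit, card_add, card_replicate] at hcard
    have htsum : (t.map d).sum ≤ K * ∑ i ∈ Finset.range n, d i :=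
      calc (t.map d).sum ≤ card t * ∑ i ∈ Finset.range n, d i := by
            simpa using sum_le_card_nsmul (t.map d) _ fun x hx => by
              obtain ⟨i, hi, rfl⟩ := mem_map.1 hx
              exact Finset.single_le_sum (fun j _ => (d j).zero_le) (Finset.mem_range.2 (ht i hi))
        _ ≤ K * ∑ i ∈ Finset.range n, d i := by gcongr; omega
    have htop := hd n n.lt_succ_self
    rw [hsplit, map_add, sum_add, map_replicate, sum_replicate, smul_eq_mul,
      Finset.sum_range_succ] at hsum
    obtain h0 | h1 | h2 : s.count n = 0 ∨ s.count n = 1 ∨ 2 ≤ s.count n := by omega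
    · rw [h0] at hsum; omega
    · rw [h1, one_mul] at hsum
      have : t = range n := ih (fun j hj => hd j (by omega)) ht (by omega) (by omega)
      rw [hsplit, h1, this, range_succ, replicate_one, singleton_add]
    · have : 2 * d n ≤ s.count n * d n := Nat.mul_le_mul_right _ h2
      have : ∑ i ∈ Finset.range n, d i ≤ K * ∑ i ∈ Finset.range n, d i :=
        Nat.le_mul_of_pos_left _ (by omega)
      omega

theorem Multiset.card_eq_of_sum_map_eq {α : Type*} {k p : ℕ} {c : α → ℕ} {s : Multiset α}
    (hc : ∀ i ∈ s, k * c i < p + c i ∧ p < (k + 1) * c i) (hp : 0 < p)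
    (hsum : (s.map c).sum = p) : card s = k := by
  have hs : s ≠ 0 := by rintro rfl; simp at hsum; omega
  have hlt₁ : k * p < (card s + 1) * p :=
    calc k * p = (s.map fun i => k * c i).sum := by rw [sum_map_mul_left, hsum]
      _ < (s.map fun i => p + c i).sum := sum_lt_sum_of_nonempty hs fun i hi => (hc i hi).1
      _ = (card s + 1) * p := by rw [sum_map_add, map_const', sum_replicate, hsum]; ring
  have hlt₂ : card s * p < (k + 1) * p :=
    calc card s * p = (s.map fun _ => p).sum := by rw [map_const', sum_replicate, smul_eq_mul]
      _ < (s.map fun i => (k + 1) * c i).sum :=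
          sum_lt_sum_of_nonempty hs fun i hi => (hc i hi).2
      _ = (k + 1) * p := by rw [sum_map_mul_left, hsum]
  have := Nat.lt_of_mul_lt_mul_right hlt₁
  have := Nat.lt_of_mul_lt_mul_right hlt₂
  omega

-- The `+ 1` makes the offsets sum to `1` modulo `k`, so that `blockDen k M` can be a prime.
def blockOffset (k i : ℕ) : ℕ := (k + 1) ^ i + if i = k - 1 then 1 else 0

def blockNum (k M i : ℕ) : ℕ := M + blockOffset k i

def blockDen (k M : ℕ) : ℕ := k * M + ∑ i ∈ range k, blockOffset k i

theorem sum_range_blockNum (k M : ℕ) : ∑ i ∈ range k, blockNum k M i = blockDen k M := by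
  simp [blockNum, blockDen, sum_add_distrib]

theorem blockOffset_lt_blockOffset {k i j : ℕ} (hij : i < j) (hj : j < k) :
    blockOffset k i < blockOffset k j := by
  have : (k + 1) ^ i < (k + 1) ^ j := Nat.pow_lt_pow_right (by omega) hij
  unfold blockOffset
  split_ifs <;> omega

theorem blockOffset_superincreasing {k j : ℕ} (hj : j < k) :
    k * ∑ i ∈ range j, blockOffset k i < blockOffset k j := by
  have hsum : ∑ i ∈ range j, blockOffset k i = ∑ i ∈ range j, (k + 1) ^ i :=
    sum_congr rfl fun i hi => by
      have := mem_range.1 hi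
      simp [blockOffset, show i ≠ k - 1 by omega]
  have hgeom := geom_sum_mul_add k j
  have : (k + 1) ^ j ≤ blockOffset k j := Nat.le_add_right _ _
  rw [hsum, mul_comm]
  omega

theorem sum_blockOffset_modEq {k : ℕ} (hk : 1 ≤ k) :
    ∑ i ∈ range k, blockOffset k i ≡ 1 [MOD k] := by
  have : ∑ i ∈ range k, blockOffset k i = ∑ i ∈ range k, (k + 1) ^ i + 1 := by
    simp only [blockOffset]
    rw [sum_add_distrib, sum_ite_eq' (range k) (k - 1) fun _ => 1,
      if_pos (mem_range.2 (by omega))]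
  rw [this, ← ZMod.natCast_eq_natCast_iff]
  push_cast
  simp

section BlockNum

variable {k M : ℕ} (hk : 1 ≤ k) (hM : k * ∑ i ∈ range k, blockOffset k i < M)
include hk hM

theorem blockNum_bounds {i : ℕ} (hi : i < k) :
    k * blockNum k M i < blockDen k M + blockNum k M i ∧
      blockDen k M < (k + 1) * blockNum k M i := by
  have hle : blockOffset k i ≤ ∑ j ∈ range k, blockOffset k j :=
    single_le_sum (fun j _ => (blockOffset k j).zero_le) (mem_range.2 hi)
  have := Nat.mul_le_mul_left k hle
  have := Nat.le_mul_of_pos_left (∑ j ∈ range k, blockOffset k j) hk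
  simp only [blockNum, blockDen, mul_add, add_mul, one_mul]
  omega

theorem blockDen_pos : 0 < blockDen k M := by
  unfold blockDen
  have : 0 < k * M := Nat.mul_pos hk (by omega)
  omega

theorem eq_range_of_sum_map_blockNum {s : Multiset ℕ} (hs : ∀ i ∈ s, i < k)
    (hsum : (s.map (blockNum k M)).sum = blockDen k M) : s = Multiset.range k := by
  have hcard : Multiset.card s = k := Multiset.card_eq_of_sum_map_eq
    (fun i hi => blockNum_bounds hk hM (hs i hi)) (blockDen_pos hk hM) hsum
  refine Multiset.eq_range_of_sum_map_eq_of_superincreasing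
    (fun j hj => blockOffset_superincreasing hj) hs hcard.le ?_
  unfold blockNum at hsum
  rw [Multiset.sum_map_add, Multiset.map_const', Multiset.sum_replicate, hcard,
    blockDen, smul_eq_mul] at hsum
  omega

end BlockNum

theorem Multiset.exists_eq_map_of_forall_mem_map {α β : Type*} {s : Multiset α} {g : α → β}
    {m : Multiset β} (h : ∀ x ∈ m, x ∈ s.map g) :
    ∃ t : Multiset α, (∀ a ∈ t, a ∈ s) ∧ t.map g = m := by
  induction m using Multiset.induction_on with
  | empty => exact ⟨0, by simp, rfl⟩
  | cons x m ih =>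
    obtain ⟨t, ht, rfl⟩ := ih fun y hy => h y (mem_cons_of_mem hy)
    obtain ⟨a, ha, rfl⟩ := mem_map.1 (h x (mem_cons_self _ _))
    exact ⟨a ::ₘ t, by simpa [ha] using ht, by simp⟩

theorem Rat.den_natCast_div_dvd (a b : ℕ) : ((a : ℚ) / b).den ∣ b := by
  have := Rat.den_dvd a b
  rw [Rat.divInt_eq_div] at this
  push_cast at this
  exact Int.natCast_dvd_natCast.mp this

structure IsRigidBlock (Z : Multiset ℚ) (d : ℕ) : Prop where
  pos : ∀ x ∈ Z, 0 < x
  den_dvd : ∀ x ∈ Z, x.den ∣ d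
  sum_eq_one : Z.sum = 1
  two_le_card : 2 ≤ Multiset.card Z
  nodup : Z.Nodup
  eq_of_sum_eq_one : ∀ m : Multiset ℚ, (∀ x ∈ m, x ∈ Z) → m.sum = 1 → m = Z

def block (k M : ℕ) : Multiset ℚ :=
  (Multiset.range k).map fun i => (blockNum k M i : ℚ) / blockDen k M

theorem sum_map_blockNum_div (k M : ℕ) (t : Multiset ℕ) :
    (t.map fun i => (blockNum k M i : ℚ) / blockDen k M).sum =
      ((t.map (blockNum k M)).sum : ℚ) / blockDen k M := by
  rw [Multiset.sum_map_div, Nat.cast_multiset_sum, Multiset.map_map]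
  rfl

theorem isRigidBlock_block {k M : ℕ} (hk : 2 ≤ k)
    (hM : k * ∑ i ∈ range k, blockOffset k i < M) : IsRigidBlock (block k M) (blockDen k M) where
  pos x hx := by
    obtain ⟨i, -, rfl⟩ := Multiset.mem_map.1 hx
    have : 0 < blockNum k M i := Nat.add_pos_left (by omega) _
    have := blockDen_pos (by omega) hM
    positivity
  den_dvd x hx := by
    obtain ⟨i, -, rfl⟩ := Multiset.mem_map.1 hx
    exact Rat.den_natCast_div_dvd _ _
  sum_eq_one := by
    have := blockDen_pos (by omega) hM
    have hsum : ((Multiset.range k).map (blockNum k M)).sum = blockDen k M :=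
      sum_range_blockNum k M
    rw [block, sum_map_blockNum_div, hsum, div_self (by positivity)]
  two_le_card := by simpa [block] using hk
  nodup := by
    refine (Multiset.nodup_range k).map_on fun i hi j hj hij => ?_
    have := blockDen_pos (by omega) hM
    rw [div_left_inj' (by positivity), Nat.cast_inj, blockNum, blockNum,
      Nat.add_left_cancel_iff] at hij
    rw [Multiset.mem_range] at hi hj
    rcases lt_trichotomy i j with h | h | h
    · exact absurd hij (blockOffset_lt_blockOffset h hj).ne
    · exact h
    · exact absurd hij (blockOffset_lt_blockOffset h hi).ne'
  eq_of_sum_eq_one m hm hsum := by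
    obtain ⟨t, ht, rfl⟩ := Multiset.exists_eq_map_of_forall_mem_map hm
    have := blockDen_pos (by omega) hM
    rw [sum_map_blockNum_div, div_eq_one_iff_eq (by positivity), Nat.cast_inj] at hsum
    rw [block, eq_range_of_sum_map_blockNum (by omega) hM
      (fun i hi => Multiset.mem_range.1 (ht i hi)) hsum]

theorem Rat.den_multiset_sum_dvd {s : Multiset ℚ} {n : ℕ} (h : ∀ x ∈ s, x.den ∣ n) :
    s.sum.den ∣ n := by
  induction s using Multiset.induction_on with
  | empty => simp
  | cons x s ih =>
    rw [Multiset.sum_cons]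
    exact (Rat.add_den_dvd_lcm _ _).trans <| Nat.lcm_dvd (h x (Multiset.mem_cons_self _ _))
      (ih fun y hy => h y (Multiset.mem_cons_of_mem hy))

theorem Rat.den_ne_one_of_pos_of_lt_one {x : ℚ} (h₀ : 0 < x) (h₁ : x < 1) : x.den ≠ 1 := by
  intro h
  rw [← (Rat.den_eq_one_iff x).1 h] at h₀ h₁
  norm_cast at h₀ h₁
  omega

namespace IsRigidBlock

variable {Z : Multiset ℚ} {d : ℕ}

theorem lt_one (hZ : IsRigidBlock Z d) {x : ℚ} (hx : x ∈ Z) : x < 1 := by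
  obtain ⟨t, rfl⟩ := Multiset.exists_cons_of_mem hx
  obtain ⟨y, hy⟩ : ∃ y, y ∈ t := Multiset.card_pos_iff_exists_mem.1 (by
    have := hZ.two_le_card; simp at this; omega)
  have hpos : ∀ z ∈ t, 0 < z := fun z hz => hZ.pos z (Multiset.mem_cons_of_mem hz)
  have : y ≤ t.sum := Multiset.single_le_sum (fun z hz => (hpos z hz).le) y hy
  have := hZ.sum_eq_one
  rw [Multiset.sum_cons] at this
  linarith [hpos y hy]

end IsRigidBlock

section RigidFamily

variable {ι : Type*} {P : Finset ι} {Z : ι → Multiset ℚ} {den : ι → ℕ}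
  (hZ : ∀ i ∈ P, IsRigidBlock (Z i) (den i)) (hcop : (P : Set ι).Pairwise (Nat.Coprime on den))
include hZ hcop

theorem index_eq_of_mem_of_mem {i j : ι} (hi : i ∈ P) (hj : j ∈ P) {x : ℚ} (hxi : x ∈ Z i)
    (hxj : x ∈ Z j) : i = j := by
  by_contra hij
  exact Rat.den_ne_one_of_pos_of_lt_one ((hZ i hi).pos x hxi) ((hZ i hi).lt_one hxi) <|
    Nat.Coprime.eq_one_of_dvd (Nat.Coprime.coprime_dvd_left ((hZ i hi).den_dvd x hxi)
      (hcop hi hj hij)) ((hZ j hj).den_dvd x hxj)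

theorem exists_forall_mem_of_sum_eq_one {m : Multiset ℚ} (hm : ∀ x ∈ m, ∃ i ∈ P, x ∈ Z i)
    (hsum : m.sum = 1) : ∃ i ∈ P, ∀ x ∈ m, x ∈ Z i := by
  classical
  obtain ⟨x, hx⟩ : ∃ x, x ∈ m := Multiset.exists_mem_of_ne_zero (by rintro rfl; simp at hsum)
  obtain ⟨i, hi, hxi⟩ := hm x hx
  refine ⟨i, hi, ?_⟩
  -- The sum over the part `m₁` of `m` inside `Z i` has denominator dividing `den i` and, being
  -- `1 - m₂.sum`, also the product of the other denominators. So it is an integer in `(0, 1]`,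
  -- which leaves no room for `m₂`.
  set m₁ := m.filter (· ∈ Z i)
  set m₂ := m.filter (· ∉ Z i)
  have hpos : ∀ y ∈ m, 0 < y := fun y hy => by
    obtain ⟨j, hj, hyj⟩ := hm y hy
    exact (hZ j hj).pos y hyj
  have hsplit : m₁.sum + m₂.sum = 1 := by rw [← Multiset.sum_add, Multiset.filter_add_not, hsum]
  have hden₁ : m₁.sum.den ∣ den i :=
    Rat.den_multiset_sum_dvd fun y hy => (hZ i hi).den_dvd y (Multiset.mem_filter.1 hy).2
  have hden₂ : m₂.sum.den ∣ ∏ j ∈ P.erase i, den j := Rat.den_multiset_sum_dvd fun y hy => by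
    obtain ⟨hym, hyi⟩ := Multiset.mem_filter.1 hy
    obtain ⟨j, hj, hyj⟩ := hm y hym
    have hji : j ≠ i := by rintro rfl; exact hyi hyj
    exact ((hZ j hj).den_dvd y hyj).trans (dvd_prod_of_mem den (mem_erase.2 ⟨hji, hj⟩))
  have hden₁' : m₁.sum.den ∣ ∏ j ∈ P.erase i, den j := by
    rw [show m₁.sum = 1 - m₂.sum by linarith]
    exact (Rat.sub_den_dvd 1 m₂.sum).trans (by simpa using hden₂)
  have hcop' : (den i).Coprime (∏ j ∈ P.erase i, den j) := Nat.Coprime.prod_right fun j hj =>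
    hcop hi (mem_of_mem_erase hj) (ne_of_mem_erase hj).symm
  have hint : m₁.sum.den = 1 := (hcop'.coprime_dvd_left hden₁).eq_one_of_dvd hden₁'
  have hx₁ : x ∈ m₁ := Multiset.mem_filter.2 ⟨hx, hxi⟩
  have h₁pos : 0 < m₁.sum := (hpos x hx).trans_le <| Multiset.single_le_sum
    (fun y hy => (hpos y (Multiset.mem_of_mem_filter hy)).le) x hx₁
  have h₂ : m₂ = 0 := by
    by_contra hne
    obtain ⟨y, hy⟩ := Multiset.exists_mem_of_ne_zero hne
    have : y ≤ m₂.sum := Multiset.single_le_sum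
      (fun z hz => (hpos z (Multiset.mem_of_mem_filter hz)).le) y hy
    exact Rat.den_ne_one_of_pos_of_lt_one h₁pos
      (by linarith [hpos y (Multiset.mem_of_mem_filter hy)]) hint
  intro y hy
  by_contra hyi
  have : y ∈ m₂ := Multiset.mem_filter.2 ⟨hy, hyi⟩
  simp [h₂] at this

end RigidFamily

theorem AddSubmonoid.mem_of_isAtomOf_closure {s : Set ℚ} (hs : ∀ x ∈ s, 0 < x) {u : ℚ}
    (hu : IsAtomOf (closure s) u) : u ∈ s := by
  obtain ⟨hmem, hne, hatom⟩ := hu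
  obtain ⟨l, hl, rfl⟩ := exists_multiset_of_mem_closure hmem
  obtain ⟨x, t, rfl⟩ : ∃ x t, l = x ::ₘ t := by
    obtain ⟨x, hx⟩ := Multiset.exists_mem_of_ne_zero (s := l) (by rintro rfl; simp at hne)
    exact ⟨x, Multiset.exists_cons_of_mem hx⟩
  rcases Multiset.empty_or_exists_mem t with rfl | ⟨y, hy⟩
  · simpa using hl x (Multiset.mem_cons_self _ _)
  have hpos : ∀ z ∈ t, 0 < z := fun z hz => hs z (hl z (Multiset.mem_cons_of_mem hz))
  have : y ≤ t.sum := Multiset.single_le_sum (fun z hz => (hpos z hz).le) y hy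
  exact absurd (Multiset.sum_cons x t) <|
    hatom x (subset_closure (hl x (Multiset.mem_cons_self _ _))) t.sum (multiset_sum_mem _ _ fun z hz => subset_closure (hl z (Multiset.mem_cons_of_mem hz)))
    (hs x (hl x (Multiset.mem_cons_self _ _))).ne' (by linarith [hpos y hy])

def blockGens {ι : Type*} (P : Finset ι) (Z : ι → Multiset ℚ) : Set ℚ := {x | ∃ i ∈ P, x ∈ Z i}

def blockMonoid {ι : Type*} (P : Finset ι) (Z : ι → Multiset ℚ) : AddSubmonoid ℚ :=
  AddSubmonoid.closure (blockGens P Z)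

section BlockMonoid

variable {ι : Type*} {P : Finset ι} {Z : ι → Multiset ℚ}

theorem blockMonoid_fg : (blockMonoid P Z).FG := by
  refine ⟨P.biUnion fun i => (Z i).toFinset, congrArg _ ?_⟩
  ext
  simp [blockGens]

theorem mem_blockMonoid {x : ℚ} :
    x ∈ blockMonoid P Z ↔ ∃ m : Multiset ℚ, (∀ y ∈ m, y ∈ blockGens P Z) ∧ m.sum = x := by
  refine ⟨AddSubmonoid.exists_multiset_of_mem_closure, ?_⟩
  rintro ⟨m, hm, rfl⟩
  exact AddSubmonoid.multiset_sum_mem _ _ fun y hy => AddSubmonoid.subset_closure (hm y hy)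

variable {den : ι → ℕ} (hZ : ∀ i ∈ P, IsRigidBlock (Z i) (den i))

theorem exists_ne_zero_of_mem_blockMonoid {x : ℚ} (hx : x ∈ blockMonoid P Z) (hx0 : x ≠ 0) :
    ∃ m : Multiset ℚ, (∀ y ∈ m, y ∈ blockGens P Z) ∧ m.sum = x ∧ m ≠ 0 := by
  obtain ⟨m, hm, rfl⟩ := mem_blockMonoid.1 hx
  exact ⟨m, hm, rfl, by rintro rfl; simp at hx0⟩

include hZ

theorem pos_of_mem_blockGens {x : ℚ} (hx : x ∈ blockGens P Z) : 0 < x := by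
  obtain ⟨i, hi, hxi⟩ := hx
  exact (hZ i hi).pos x hxi

theorem nonneg_of_mem_blockMonoid {x : ℚ} (hx : x ∈ blockMonoid P Z) : 0 ≤ x := by
  obtain ⟨m, hm, rfl⟩ := mem_blockMonoid.1 hx
  exact Multiset.sum_nonneg fun y hy => (pos_of_mem_blockGens hZ (hm y hy)).le

theorem natCast_mem_blockMonoid (hP : P.Nonempty) (n : ℕ) : (n : ℚ) ∈ blockMonoid P Z := by
  obtain ⟨i, hi⟩ := hP
  have : (1 : ℚ) ∈ blockMonoid P Z :=
    mem_blockMonoid.2 ⟨Z i, fun x hx => ⟨i, hi, hx⟩, (hZ i hi).sum_eq_one⟩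
  simpa using AddSubmonoid.nsmul_mem _ this n

variable (hcop : (P : Set ι).Pairwise (Nat.Coprime on den))
include hcop

theorem exists_eq_of_sum_eq_one {m : Multiset ℚ} (hm : ∀ x ∈ m, x ∈ blockGens P Z)
    (hsum : m.sum = 1) : ∃ i ∈ P, m = Z i := by
  obtain ⟨i, hi, hmi⟩ := exists_forall_mem_of_sum_eq_one hZ hcop hm hsum
  exact ⟨i, hi, (hZ i hi).eq_of_sum_eq_one m hmi hsum⟩

theorem isAtomOf_blockMonoid_iff {u : ℚ} : IsAtomOf (blockMonoid P Z) u ↔ u ∈ blockGens P Z := by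
  refine ⟨AddSubmonoid.mem_of_isAtomOf_closure fun x => pos_of_mem_blockGens hZ, fun hu => ?_⟩
  refine ⟨AddSubmonoid.subset_closure hu, (pos_of_mem_blockGens hZ hu).ne', ?_⟩
  rintro v hv w hw hv0 hw0 rfl
  obtain ⟨i, hi, hvw⟩ := hu
  obtain ⟨mv, hmv, rfl, hmv0⟩ := exists_ne_zero_of_mem_blockMonoid hv hv0
  obtain ⟨mw, hmw, rfl, hmw0⟩ := exists_ne_zero_of_mem_blockMonoid hw hw0
  set R := (Z i).erase (mv.sum + mw.sum)
  have hZR : Z i = (mv.sum + mw.sum) ::ₘ R := (Multiset.cons_erase hvw).symm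
  obtain ⟨j, hj, hj_eq⟩ := exists_eq_of_sum_eq_one hZ hcop (m := mv + mw + R) (by
      simp only [Multiset.mem_add]
      rintro x ((hx | hx) | hx)
      exacts [hmv x hx, hmw x hx, ⟨i, hi, Multiset.mem_of_mem_erase hx⟩]) (by
      have := (hZ i hi).sum_eq_one
      rw [hZR, Multiset.sum_cons] at this
      rw [Multiset.sum_add, Multiset.sum_add, ← this])
  obtain ⟨y, hy⟩ : ∃ y, y ∈ R := Multiset.card_pos_iff_exists_mem.1 (by
    have := (hZ i hi).two_le_card; rw [hZR, Multiset.card_cons] at this; omega)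
  have hij : i = j := index_eq_of_mem_of_mem hZ hcop hi hj (Multiset.mem_of_mem_erase hy)
    (hj_eq ▸ Multiset.mem_add.2 (Or.inr hy))
  subst hij
  rw [hZR, ← Multiset.singleton_add, add_left_inj] at hj_eq
  have := congrArg Multiset.card hj_eq
  rw [Multiset.card_add, Multiset.card_singleton] at this
  have := Multiset.card_pos.2 hmv0
  have := Multiset.card_pos.2 hmw0
  omega

theorem lt_one_of_isAtomOf_blockMonoid {u : ℚ} (hu : IsAtomOf (blockMonoid P Z) u) : u < 1 := by
  obtain ⟨i, hi, hui⟩ := (isAtomOf_blockMonoid_iff hZ hcop).1 hu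
  exact (hZ i hi).lt_one hui

theorem one_squarefree_blockMonoid :
    ¬ ∃ b ∈ blockMonoid P Z, ∃ c ∈ blockMonoid P Z, b ≠ 0 ∧ c ≠ 0 ∧ (1 : ℚ) = b + b + c := by
  rintro ⟨b, hb, c, hc, hb0, hc0, hbc⟩
  obtain ⟨mb, hmb, rfl, hmb0⟩ := exists_ne_zero_of_mem_blockMonoid hb hb0
  obtain ⟨mc, hmc, rfl, -⟩ := exists_ne_zero_of_mem_blockMonoid hc hc0
  obtain ⟨i, hi, hi_eq⟩ := exists_eq_of_sum_eq_one hZ hcop (m := mb + mb + mc) (by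
      simp only [Multiset.mem_add]
      rintro x ((hx | hx) | hx)
      exacts [hmb x hx, hmb x hx, hmc x hx]) (by rw [Multiset.sum_add, Multiset.sum_add, hbc])
  obtain ⟨x, hx⟩ := Multiset.exists_mem_of_ne_zero hmb0
  have hcount := Multiset.nodup_iff_count_le_one.1 (hZ i hi).nodup x
  rw [← hi_eq, Multiset.count_add, Multiset.count_add] at hcount
  have := Multiset.count_pos.2 hx
  omega

theorem isFactorizationOf_one_blockMonoid_iff {z : Multiset ℚ} :
    IsFactorizationOf (blockMonoid P Z) 1 z ↔ ∃ i ∈ P, Z i = z := by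
  simp only [IsFactorizationOf, isAtomOf_blockMonoid_iff hZ hcop]
  constructor
  · rintro ⟨hz, hsum⟩
    obtain ⟨i, hi, rfl⟩ := exists_eq_of_sum_eq_one hZ hcop hz hsum
    exact ⟨i, hi, rfl⟩
  · rintro ⟨i, hi, rfl⟩
    exact ⟨fun x hx => ⟨i, hi, hx⟩, (hZ i hi).sum_eq_one⟩

theorem ncard_factorizations_one_blockMonoid (k : ℕ) :
    {z | IsFactorizationOf (blockMonoid P Z) 1 z ∧ Multiset.card z = k}.ncard =
      #{i ∈ P | Multiset.card (Z i) = k} := by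
  have hset : {z | IsFactorizationOf (blockMonoid P Z) 1 z ∧ Multiset.card z = k} =
      Z '' ↑({i ∈ P | Multiset.card (Z i) = k}) := by
    ext z
    simp only [Set.mem_ofPred_eq, isFactorizationOf_one_blockMonoid_iff hZ hcop, coe_filter,
      Set.mem_image]
    constructor
    · rintro ⟨⟨i, hi, rfl⟩, hk⟩
      exact ⟨i, ⟨hi, hk⟩, rfl⟩
    · rintro ⟨i, ⟨hi, hk⟩, rfl⟩
      exact ⟨⟨i, hi, rfl⟩, hk⟩
  rw [hset, Set.InjOn.ncard_image, Set.ncard_coe_finset]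
  intro i hi j hj hij
  have hi := (mem_filter.1 hi).1
  obtain ⟨x, hx⟩ := (Multiset.card_pos_iff_exists_mem (s := Z i)).1 (by
    have := (hZ i hi).two_le_card; omega)
  exact index_eq_of_mem_of_mem hZ hcop hi (mem_filter.1 hj).1 hx (hij ▸ hx)

end BlockMonoid

theorem exists_prime_blockDen {k : ℕ} (hk : 1 ≤ k) (N : ℕ) :
    ∃ M, k * ∑ i ∈ range k, blockOffset k i < M ∧ N < blockDen k M ∧ (blockDen k M).Prime := by
  set T := ∑ i ∈ range k, blockOffset k i
  obtain ⟨q, hq, hqN, hq1⟩ := Nat.exists_prime_gt_modEq_one (max N (k * (k * T + 1) + T))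
    (by omega : k ≠ 0)
  have hqT : k * (k * T + 1) + T < q := (le_max_right _ _).trans_lt hqN
  have hTq : T ≤ q := by omega
  have hdvd : k ∣ q - T := (Nat.modEq_iff_dvd' hTq).1 ((sum_blockOffset_modEq hk).trans hq1.symm)
  have hdiv : (q - T) / k * k = q - T := Nat.div_mul_cancel hdvd
  refine ⟨(q - T) / k, ?_, ?_⟩
  · refine Nat.lt_of_mul_lt_mul_right (a := k) ?_
    rw [hdiv, mul_comm (k * T)]
    rw [mul_add] at hqT
    omega
  · rw [blockDen, mul_comm, hdiv, Nat.sub_add_cancel hTq]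
    exact ⟨(le_max_left _ _).trans_lt hqN, hq⟩

theorem exists_blocks (L : Multiset ℕ) (hL : ∀ k ∈ L, 2 ≤ k) :
    ∃ P : Finset (ℕ × ℕ), P.val.map Prod.fst = L ∧
      (∀ b ∈ P, 2 ≤ b.1 ∧ b.1 * ∑ i ∈ range b.1, blockOffset b.1 i < b.2 ∧
        (blockDen b.1 b.2).Prime) ∧
      (P : Set (ℕ × ℕ)).Pairwise (Nat.Coprime on fun b => blockDen b.1 b.2) := by
  induction L using Multiset.induction_on with
  | empty => exact ⟨∅, rfl, by simp, by simp⟩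
  | cons k L ih =>
    obtain ⟨P, hPL, hP, hcop⟩ := ih fun k' hk' => hL k' (Multiset.mem_cons_of_mem hk')
    have hk := hL k (Multiset.mem_cons_self _ _)
    obtain ⟨M, hM, hbig, hprime⟩ := exists_prime_blockDen (by omega : 1 ≤ k)
      (P.sup fun b => blockDen b.1 b.2)
    have hlt : ∀ b ∈ P, blockDen b.1 b.2 < blockDen k M := fun b hb =>
      (le_sup (f := fun b => blockDen b.1 b.2) hb).trans_lt hbig
    have hnotin : (k, M) ∉ P := fun h => (hlt _ h).false
    refine ⟨cons (k, M) P hnotin, by rw [cons_val, Multiset.map_cons, hPL], ?_, ?_⟩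
    · simp only [mem_cons, forall_eq_or_imp]
      exact ⟨⟨hk, hM, hprime⟩, hP⟩
    · rw [coe_cons, Set.pairwise_insert_of_symm]
      refine ⟨hcop, fun b hb _ => (Nat.coprime_primes hprime (hP b hb).2.2).2 (hlt b hb).ne'⟩

theorem exists_multiset_count_eq (f : ℕ → ℕ) (hsupp : {k : ℕ | 2 ≤ k ∧ f k ≠ 0}.Finite) :
    ∃ L : Multiset ℕ, (∀ k ∈ L, 2 ≤ k) ∧ ∀ k, 2 ≤ k → L.count k = f k := by
  refine ⟨∑ k ∈ hsupp.toFinset, Multiset.replicate (f k) k, fun k hk => ?_, fun k hk => ?_⟩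
  · obtain ⟨j, hj, hkj⟩ := Multiset.mem_sum.1 hk
    rw [Multiset.eq_of_mem_replicate hkj]
    exact (hsupp.mem_toFinset.1 hj).1
  · rw [Multiset.count_sum']
    simp only [Multiset.count_replicate, sum_ite_eq', Set.Finite.mem_toFinset]
    split_ifs with h
    · rfl
    · simp only [Set.mem_ofPred_eq, not_and, not_not] at h
      exact (h hk).symm

/-- For every finitely supported map `f : ℕ_{≥2} → ℕ` that is not
identically zero there exists a finitely generated additive submonoid `H ⊆ ℚ_{≥0}`
with `ℕ ⊆ H`, all of whose atoms are `< 1`, such that `1` is squarefree in `H` and,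
for every `k ≥ 2`, the number of factorizations of `1` in `H` of length `k` is `f k`. -/
theorem stmt9 (f : ℕ → ℕ) (hsupp : {k : ℕ | 2 ≤ k ∧ f k ≠ 0}.Finite)
    (hne : ∃ k, 2 ≤ k ∧ f k ≠ 0) :
    ∃ H : AddSubmonoid ℚ, H.FG ∧ (∀ x ∈ H, 0 ≤ x) ∧ (∀ n : ℕ, (n : ℚ) ∈ H) ∧
      (∀ u, IsAtomOf H u → u < 1) ∧
      (¬ ∃ b ∈ H, ∃ c ∈ H, b ≠ 0 ∧ c ≠ 0 ∧ (1 : ℚ) = b + b + c) ∧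
      ∀ k : ℕ, 2 ≤ k →
        {z | IsFactorizationOf H 1 z ∧ Multiset.card z = k}.ncard = f k := by
  obtain ⟨L, hL, hcount⟩ := exists_multiset_count_eq f hsupp
  obtain ⟨P, hPL, hP, hcop⟩ := exists_blocks L hL
  set Z : ℕ × ℕ → Multiset ℚ := fun b => block b.1 b.2
  have hZ : ∀ b ∈ P, IsRigidBlock (Z b) (blockDen b.1 b.2) := fun b hb =>
    isRigidBlock_block (hP b hb).1 (hP b hb).2.1
  have hPne : P.Nonempty := by
    obtain ⟨k, hk, hfk⟩ := hne
    rw [nonempty_iff_ne_empty]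
    rintro rfl
    rw [← hcount k hk, ← hPL] at hfk
    simp at hfk
  refine ⟨blockMonoid P Z, blockMonoid_fg, fun x => nonneg_of_mem_blockMonoid hZ,
    natCast_mem_blockMonoid hZ hPne, fun u => lt_one_of_isAtomOf_blockMonoid hZ hcop,
    one_squarefree_blockMonoid hZ hcop, fun k hk => ?_⟩
  rw [ncard_factorizations_one_blockMonoid hZ hcop, ← hcount k hk, ← hPL, Multiset.count_map]
  simp [Z, block, card_def, eq_comm]
end

section
/- For every finite nonempty set D of positive integers there exists a numerical monoid H such that D ⊆ Δ(H), where Δ(H) is the set of distances of H. -/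
/-- The set of lengths of `a` in `H`. -/
def SetOfLengths (H : AddSubmonoid ℕ) (a : ℕ) : Set ℕ :=
  {n | ∃ z, IsFactorizationOfN H a z ∧ Multiset.card z = n}

/-- `d` belongs to the set of distances `Δ(H)`: there is an element `a ∈ H` whose set of
lengths contains two consecutive lengths `x < y` (no length strictly in between) with
`y - x = d`. -/
def IsDistanceOf (H : AddSubmonoid ℕ) (d : ℕ) : Prop :=
  ∃ a ∈ H, ∃ x ∈ SetOfLengths H a, ∃ y ∈ SetOfLengths H a,
    x < y ∧ y - x = d ∧ ∀ n ∈ SetOfLengths H a, ¬ (x < n ∧ n < y)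

/-!
Fix `M = max D`, the base `b = 4M + 6` and, for `d ∈ D`, the offset `o_d = 2M + 2 - d`. The
monoid is generated by `b`, `2b + 1` and `g_d = (1 + o_d + d) b + o_d` for `d ∈ D`, and then
filled in above `b²`. Below `b²`, a multiset of generators has digit sums (in base `b`) equal
to the two digits of its sum, and its cardinality is the high digit minus the low digit minus
`∑ d` over the `g_d` it contains. In `a_d = o_d · b + g_d = (d + 1) b + o_d (2b + 1)` the low
digit is `o_d`, so a factorization using some `g_e` has `o_e ≤ o_d`, i.e. `e ≥ d`: its length
is at most `o_d + 1`, attained by the first one, while the factorizations avoiding every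
`g_e` all have length `o_d + d + 1`.
-/

theorem mem_of_mem_setOfLengths {H : AddSubmonoid ℕ} {a ℓ : ℕ} (h : ℓ ∈ SetOfLengths H a) :
    a ∈ H := by
  obtain ⟨z, ⟨hatoms, rfl⟩, -⟩ := h
  exact H.multiset_sum_mem z fun x hx => (hatoms x hx).1

namespace AddSubmonoid

def unionIci (S : AddSubmonoid ℕ) (T : ℕ) : AddSubmonoid ℕ where
  carrier := {x | x ∈ S ∨ T ≤ x}
  zero_mem' := Or.inl S.zero_mem
  add_mem' := by
    rintro a b (ha | ha) (hb | hb)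
    · exact Or.inl (S.add_mem ha hb)
    · exact Or.inr (hb.trans (Nat.le_add_left _ _))
    all_goals exact Or.inr (ha.trans (Nat.le_add_right _ _))

variable {S : AddSubmonoid ℕ} {T : ℕ}

theorem isNumericalMonoid_unionIci : IsNumericalMonoid (S.unionIci T) :=
  (Set.finite_Iio T).subset fun _ hx => not_le.1 fun h => hx (Or.inr h)

theorem mem_unionIci_of_lt {x : ℕ} (hx : x < T) : x ∈ S.unionIci T ↔ x ∈ S :=
  ⟨fun h => h.resolve_right (by omega), Or.inl⟩

theorem isAtomOfN_unionIci_iff {u : ℕ} (hu : u < T) :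
    IsAtomOfN (S.unionIci T) u ↔ IsAtomOfN S u := by
  have hmem : ∀ v ≤ u, v ∈ S.unionIci T ↔ v ∈ S := fun v hv =>
    mem_unionIci_of_lt (by omega)
  refine and_congr (mem_unionIci_of_lt hu) (and_congr Iff.rfl ⟨?_, ?_⟩)
  · intro h v hv w hw hv0 hw0 huvw
    exact h v (Or.inl hv) w (Or.inl hw) hv0 hw0 huvw
  · intro h v hv w hw hv0 hw0 huvw
    exact h v ((hmem v (by omega)).1 hv) w ((hmem w (by omega)).1 hw) hv0 hw0 huvw

theorem setOfLengths_unionIci {a : ℕ} (ha : a < T) :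
    SetOfLengths (S.unionIci T) a = SetOfLengths S a := by
  have hatom : ∀ z : Multiset ℕ, z.sum = a → ∀ x ∈ z,
      (IsAtomOfN (S.unionIci T) x ↔ IsAtomOfN S x) := fun z hz x hx =>
    isAtomOfN_unionIci_iff ((Multiset.le_sum_of_mem hx).trans_lt (hz ▸ ha))
  ext ℓ
  constructor
  · rintro ⟨z, ⟨hz, hsum⟩, hcard⟩
    exact ⟨z, ⟨fun x hx => (hatom z hsum x hx).1 (hz x hx), hsum⟩, hcard⟩
  · rintro ⟨z, ⟨hz, hsum⟩, hcard⟩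
    exact ⟨z, ⟨fun x hx => (hatom z hsum x hx).2 (hz x hx), hsum⟩, hcard⟩

variable {G : Set ℕ}

theorem mem_of_isAtomOfN_closure (hG : 0 ∉ G) {u : ℕ} (hu : IsAtomOfN (closure G) u) :
    u ∈ G := by
  obtain ⟨l, hl, rfl⟩ := exists_multiset_of_mem_closure hu.1
  obtain ⟨x, hx⟩ := Multiset.exists_mem_of_ne_zero (s := l) fun h0 =>
    hu.2.1 (by rw [h0, Multiset.sum_zero])
  obtain ⟨t, rfl⟩ := Multiset.exists_cons_of_mem hx
  have hxG := hl x hx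
  have ht : t.sum = 0 := by
    by_contra ht
    refine hu.2.2 x (subset_closure hxG) t.sum
      (multiset_sum_mem _ t fun y hy => subset_closure (hl y (Multiset.mem_cons_of_mem hy)))
      (ne_of_mem_of_not_mem hxG hG) ht ?_
    rw [Multiset.sum_cons]
  rwa [Multiset.sum_cons, ht, add_zero]

theorem isAtomOfN_closure (hG : 0 ∉ G) {u : ℕ} (hu : u ∈ G)
    (h : ∀ l : Multiset ℕ, (∀ y ∈ l, y ∈ G) → l.sum = u → Multiset.card l ≤ 1) :
    IsAtomOfN (closure G) u := by
  refine ⟨subset_closure hu, ne_of_mem_of_not_mem hu hG, ?_⟩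
  rintro v hv w hw hv0 hw0 rfl
  obtain ⟨lv, hlv, rfl⟩ := exists_multiset_of_mem_closure hv
  obtain ⟨lw, hlw, rfl⟩ := exists_multiset_of_mem_closure hw
  have hcard := h (lv + lw) (by simpa [or_imp, forall_and] using And.intro hlv hlw)
    (Multiset.sum_add lv lw)
  have hv' : lv ≠ 0 := by rintro rfl; exact hv0 rfl
  have hw' : lw ≠ 0 := by rintro rfl; exact hw0 rfl
  rw [Multiset.card_add] at hcard
  have := Multiset.card_pos.2 hv'
  have := Multiset.card_pos.2 hw'
  omega

theorem setOfLengths_closure (hG : 0 ∉ G) (hatom : ∀ x ∈ G, IsAtomOfN (closure G) x) (a : ℕ) :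
    SetOfLengths (closure G) a =
      {ℓ | ∃ z : Multiset ℕ, (∀ x ∈ z, x ∈ G) ∧ z.sum = a ∧ Multiset.card z = ℓ} := by
  ext ℓ
  constructor
  · rintro ⟨z, ⟨hz, hsum⟩, hcard⟩
    exact ⟨z, fun x hx => mem_of_isAtomOfN_closure hG (hz x hx), hsum, hcard⟩
  · rintro ⟨z, hz, hsum, hcard⟩
    exact ⟨z, ⟨fun x hx => hatom x (hz x hx), hsum⟩, hcard⟩

end AddSubmonoid

theorem Multiset.sum_map_div_mod_eq {b : ℕ} {z : Multiset ℕ} (hz : ∀ x ∈ z, x % b ≤ x / b)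
    (hsum : z.sum < b * b) :
    (z.map (· / b)).sum = z.sum / b ∧ (z.map (· % b)).sum = z.sum % b := by
  have hb : 0 < b := Nat.pos_of_ne_zero (by rintro rfl; simp at hsum)
  have hexp : z.sum = b * (z.map (· / b)).sum + (z.map (· % b)).sum := by
    rw [← Multiset.sum_map_mul_left, ← Multiset.sum_map_add]
    conv_lhs => rw [← Multiset.map_id' z]
    exact congrArg Multiset.sum (Multiset.map_congr rfl fun x _ => (Nat.div_add_mod x b).symm)
  have hle : (z.map (· % b)).sum ≤ (z.map (· / b)).sum := Multiset.sum_map_le_sum_map _ _ hz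
  have hhi : (z.map (· / b)).sum < b :=
    Nat.lt_of_mul_lt_mul_left ((hexp ▸ Nat.le_add_right _ _).trans_lt hsum)
  rw [hexp, Nat.mul_add_div hb, Nat.mul_add_mod, Nat.div_eq_of_lt (by omega),
    Nat.mod_eq_of_lt (by omega)]
  exact ⟨rfl, rfl⟩

namespace DistanceRealization

variable (D : Finset ℕ)

def base : ℕ := 4 * D.sup id + 6

def offset (d : ℕ) : ℕ := 2 * D.sup id + 2 - d

def gen (d : ℕ) : ℕ := (1 + offset D d + d) * base D + offset D d

def gens : Set ℕ := insert (base D) (insert (2 * base D + 1) (gen D '' D))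

def monoid : AddSubmonoid ℕ := (AddSubmonoid.closure (gens D)).unionIci (base D * base D)

def excess (x : ℕ) : ℕ := x / base D - x % base D - 1

variable {D}

theorem two_lt_base : 2 < base D := by
  unfold base
  omega

theorem offset_lt_base (d : ℕ) : offset D d < base D := by
  unfold offset base
  omega

theorem le_sup_id {d : ℕ} (hd : d ∈ D) : d ≤ D.sup id :=
  Finset.le_sup (f := id) hd

theorem add_one_lt_offset {d : ℕ} (hd : d ∈ D) : d + 1 < offset D d := by
  have := le_sup_id hd
  unfold offset
  omega

theorem le_of_offset_le {d e : ℕ} (hd : d ∈ D) (he : e ∈ D) (h : offset D e ≤ offset D d) :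
    d ≤ e := by
  have := le_sup_id hd
  have := le_sup_id he
  unfold offset at h
  omega

theorem two_mul_offset_add_lt_base {d : ℕ} (hd : d ∈ D) : 2 * offset D d + d + 1 < base D := by
  have := le_sup_id hd
  unfold offset base
  omega

theorem base_mem_gens : base D ∈ gens D :=
  Set.mem_insert _ _

theorem two_mul_base_add_one_mem_gens : 2 * base D + 1 ∈ gens D :=
  Set.mem_insert_of_mem _ (Set.mem_insert _ _)

theorem gen_mem_gens {d : ℕ} (hd : d ∈ D) : gen D d ∈ gens D :=
  Set.mem_insert_of_mem _ (Set.mem_insert_of_mem _ ⟨d, hd, rfl⟩)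

theorem gen_div_base (d : ℕ) : gen D d / base D = 1 + offset D d + d := by
  rw [gen, mul_comm, Nat.mul_add_div (by linarith [two_lt_base (D := D)]),
    Nat.div_eq_of_lt (offset_lt_base d), add_zero]

theorem gen_mod_base (d : ℕ) : gen D d % base D = offset D d := by
  rw [gen, mul_comm, Nat.mul_add_mod, Nat.mod_eq_of_lt (offset_lt_base d)]

theorem excess_gen (d : ℕ) : excess D (gen D d) = d := by
  rw [excess, gen_div_base, gen_mod_base]
  omega

theorem base_div_mod : base D / base D = 1 ∧ base D % base D = 0 :=
  ⟨Nat.div_self (by linarith [two_lt_base (D := D)]), Nat.mod_self _⟩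

theorem two_mul_base_add_one_div_mod :
    (2 * base D + 1) / base D = 2 ∧ (2 * base D + 1) % base D = 1 := by
  have hb : 1 < base D := by linarith [two_lt_base (D := D)]
  rw [Nat.mul_comm, Nat.mul_add_div (by omega), Nat.mul_add_mod, Nat.div_eq_of_lt hb,
    Nat.mod_eq_of_lt hb]
  exact ⟨rfl, rfl⟩

theorem mod_add_one_le_div {x : ℕ} (hx : x ∈ gens D) : x % base D + 1 ≤ x / base D := by
  rcases hx with rfl | rfl | ⟨d, -, rfl⟩
  · simp [base_div_mod]
  · simp [two_mul_base_add_one_div_mod]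
  · rw [gen_div_base, gen_mod_base]
    omega

theorem zero_notMem_gens : 0 ∉ gens D := fun h => by
  simpa using mod_add_one_le_div h

theorem card_add_sum_mod_add_sum_excess {z : Multiset ℕ} (hz : ∀ x ∈ z, x ∈ gens D) :
    Multiset.card z + (z.map (· % base D)).sum + (z.map (excess D)).sum =
      (z.map (· / base D)).sum := by
  induction z using Multiset.induction with
  | empty => simp
  | cons x z ih =>
    have hx := mod_add_one_le_div (hz x (Multiset.mem_cons_self x z))
    have := ih fun y hy => hz y (Multiset.mem_cons_of_mem hy)
    simp only [Multiset.card_cons, Multiset.map_cons, Multiset.sum_cons, excess]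
    omega

theorem card_add_le_of_sum_lt {z : Multiset ℕ} (hz : ∀ x ∈ z, x ∈ gens D)
    (hsum : z.sum < base D * base D) :
    Multiset.card z + z.sum % base D ≤ z.sum / base D := by
  obtain ⟨hhi, hlo⟩ :=
    Multiset.sum_map_div_mod_eq (fun x hx => Nat.le_of_succ_le (mod_add_one_le_div (hz x hx))) hsum
  have := card_add_sum_mod_add_sum_excess hz
  omega

/-- Either `z` contains some `g_e`, and then `e ≥ d`, or it consists of copies of `b` and
`2b + 1` only, with exactly `o_d` of the latter. -/
theorem card_of_sum_eq {d : ℕ} (hd : d ∈ D) {A : ℕ} (hA : A < base D) {z : Multiset ℕ}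
    (hz : ∀ x ∈ z, x ∈ gens D) (hsum : z.sum = A * base D + offset D d) :
    Multiset.card z + offset D d + d ≤ A ∨
      (Multiset.card z + offset D d = A ∧ offset D d ≤ Multiset.card z) := by
  have hlt : z.sum < base D * base D := by
    have := offset_lt_base (D := D) d
    rw [hsum]
    nlinarith
  obtain ⟨hhi, hlo⟩ :=
    Multiset.sum_map_div_mod_eq (fun x hx => Nat.le_of_succ_le (mod_add_one_le_div (hz x hx))) hlt
  rw [hsum, Nat.mul_comm, Nat.mul_add_div (by omega), Nat.div_eq_of_lt (offset_lt_base d),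
    add_zero] at hhi
  rw [hsum, Nat.mul_add_mod_self_right, Nat.mod_eq_of_lt (offset_lt_base d)] at hlo
  have hcard := card_add_sum_mod_add_sum_excess hz
  by_cases hgen : ∃ e ∈ D, gen D e ∈ z
  · obtain ⟨e, he, hez⟩ := hgen
    have hoff : offset D e ≤ offset D d := by
      rw [← hlo, ← gen_mod_base e]
      exact Multiset.le_sum_of_mem (Multiset.mem_map_of_mem (· % base D) hez)
    have hexc : e ≤ (z.map (excess D)).sum := by
      rw [← excess_gen (D := D) e]
      exact Multiset.le_sum_of_mem (Multiset.mem_map_of_mem (excess D) hez)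
    have := le_of_offset_le hd he hoff
    left
    omega
  · push Not at hgen
    have hplain : ∀ x ∈ z, x % base D ≤ 1 ∧ excess D x = 0 := by
      intro x hx
      rcases hz x hx with rfl | rfl | ⟨e, he, rfl⟩
      · simp [excess, base_div_mod]
      · simp [excess, two_mul_base_add_one_div_mod]
      · exact absurd hx (hgen e he)
    have hexc : (z.map (excess D)).sum = 0 :=
      Multiset.sum_eq_zero fun y hy => by
        obtain ⟨x, hx, rfl⟩ := Multiset.mem_map.1 hy
        exact (hplain x hx).2
    have hmod : (z.map (· % base D)).sum ≤ Multiset.card z := by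
      simpa using Multiset.sum_map_le_sum_map (· % base D) (fun _ => 1) fun x hx => (hplain x hx).1
    right
    omega

theorem isAtomOfN_closure_gens {x : ℕ} (hx : x ∈ gens D) :
    IsAtomOfN (AddSubmonoid.closure (gens D)) x := by
  have hb := two_lt_base (D := D)
  refine AddSubmonoid.isAtomOfN_closure zero_notMem_gens hx fun z hz hsum => ?_
  rcases hx with rfl | rfl | ⟨d, hd, rfl⟩
  · have := card_add_le_of_sum_lt hz (by nlinarith)
    rw [hsum, base_div_mod.1] at this
    omega
  · have := card_add_le_of_sum_lt hz (by nlinarith)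
    rw [hsum, two_mul_base_add_one_div_mod.1, two_mul_base_add_one_div_mod.2] at this
    omega
  · have := add_one_lt_offset hd
    have := card_of_sum_eq hd (two_mul_offset_add_lt_base hd |>.trans_le' (by omega)) hz hsum
    omega

theorem setOfLengths_monoid_eq {a : ℕ} (ha : a < base D * base D) :
    SetOfLengths (monoid D) a =
      {ℓ | ∃ z : Multiset ℕ, (∀ x ∈ z, x ∈ gens D) ∧ z.sum = a ∧ Multiset.card z = ℓ} := by
  rw [monoid, AddSubmonoid.setOfLengths_unionIci ha,
    AddSubmonoid.setOfLengths_closure zero_notMem_gens fun _ => isAtomOfN_closure_gens]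

theorem isDistanceOf_monoid {d : ℕ} (hd : d ∈ D) (hd0 : 0 < d) : IsDistanceOf (monoid D) d := by
  have hA := two_mul_offset_add_lt_base hd
  have ha : (2 * offset D d + d + 1) * base D + offset D d < base D * base D := by
    nlinarith [offset_lt_base (D := D) d]
  set a := (2 * offset D d + d + 1) * base D + offset D d
  have hlen := setOfLengths_monoid_eq ha
  have hshort : offset D d + 1 ∈ SetOfLengths (monoid D) a := by
    rw [hlen]
    refine ⟨.replicate (offset D d) (base D) + {gen D d}, ?_, ?_, ?_⟩
    · simp only [Multiset.mem_add, Multiset.mem_singleton]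
      rintro x (hx | rfl)
      · exact Multiset.eq_of_mem_replicate hx ▸ base_mem_gens
      · exact gen_mem_gens hd
    · rw [Multiset.sum_add, Multiset.sum_replicate, Multiset.sum_singleton, smul_eq_mul, gen]
      ring
    · simp
  have hlong : offset D d + d + 1 ∈ SetOfLengths (monoid D) a := by
    rw [hlen]
    refine ⟨.replicate (d + 1) (base D) + .replicate (offset D d) (2 * base D + 1), ?_, ?_, ?_⟩
    · simp only [Multiset.mem_add]
      rintro x (hx | hx) <;> rw [Multiset.eq_of_mem_replicate hx]
      · exact base_mem_gens
      · exact two_mul_base_add_one_mem_gens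
    · rw [Multiset.sum_add, Multiset.sum_replicate, Multiset.sum_replicate, smul_eq_mul,
        smul_eq_mul]
      ring
    · simp only [Multiset.card_add, Multiset.card_replicate]
      omega
  refine ⟨a, mem_of_mem_setOfLengths hshort, _, hshort, _, hlong, by omega, by omega, ?_⟩
  intro ℓ hℓ
  rw [hlen] at hℓ
  obtain ⟨z, hz, hsum, rfl⟩ := hℓ
  have := card_of_sum_eq hd hA hz hsum
  omega

end DistanceRealization

open DistanceRealization in
theorem stmt10_general (D : Finset ℕ) (hpos : ∀ d ∈ D, 0 < d) :
    ∃ H : AddSubmonoid ℕ, IsNumericalMonoid H ∧ ∀ d ∈ D, IsDistanceOf H d :=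
  ⟨monoid D, AddSubmonoid.isNumericalMonoid_unionIci, fun d hd =>
    isDistanceOf_monoid hd (hpos d hd)⟩

/-- For every finite nonempty set `D` of positive integers there is a
numerical monoid `H` with `D ⊆ Δ(H)`. -/
theorem stmt10 (D : Finset ℕ) (hD : D.Nonempty) (hpos : ∀ d ∈ D, 0 < d) :
    ∃ H : AddSubmonoid ℕ, IsNumericalMonoid H ∧ ∀ d ∈ D, IsDistanceOf H d :=
  stmt10_general D hpos
end

section
/- Let K be a field, H a numerical monoid, and c ∈ H. Then the set of lengths of the monomial X^c in the semigroup algebra K[H] equals the set of lengths of c in H, and for every k ∈ ℕ the number of factorizations of X^c in K[H] of length k (counted up to associates) equals the number of factorizations of c in H of length k. -/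
/-- The semigroup algebra `K[H] ⊆ K[X]`: polynomials whose support is contained in `H`. -/
def semigroupAlgebra (K : Type*) [Field K] (H : AddSubmonoid ℕ) :
    Subalgebra K (Polynomial K) where
  carrier := {p : Polynomial K | ∀ n ∈ p.support, n ∈ H}
  mul_mem' := by
    intro a b ha hb n hn
    rw [Polynomial.mem_support_iff, Polynomial.coeff_mul] at hn
    obtain ⟨⟨i, j⟩, hij, hne⟩ := Finset.exists_ne_zero_of_sum_ne_zero hn
    have hi : a.coeff i ≠ 0 := fun h => hne (by simp [h])
    have hj : b.coeff j ≠ 0 := fun h => hne (by simp [h])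
    have hsum := Finset.HasAntidiagonal.mem_antidiagonal.mp hij
    exact hsum ▸ H.add_mem (ha i (Polynomial.mem_support_iff.mpr hi))
      (hb j (Polynomial.mem_support_iff.mpr hj))
  add_mem' := by
    intro a b ha hb n hn
    rcases Finset.mem_union.mp (Polynomial.support_add hn) with h | h
    · exact ha n h
    · exact hb n h
  algebraMap_mem' := by
    intro r n hn
    have : n = 0 := by
      by_contra h
      simp [Polynomial.algebraMap_eq, Polynomial.mem_support_iff, Polynomial.coeff_C, h] at hn
    exact this ▸ H.zero_mem

/-- The factorizations of `g ∈ K[H]` of length `k`, counted up to associates: multisets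
of `k` associate-classes of irreducible elements of `K[H]` whose product is the class
of `g`. -/
def AlgFactorizationsOfLength {K : Type*} [Field K] {H : AddSubmonoid ℕ}
    (g : semigroupAlgebra K H) (k : ℕ) :
    Set (Multiset (Associates ↥(semigroupAlgebra K H))) :=
  {z | (∀ a ∈ z, ∃ u : ↥(semigroupAlgebra K H), Irreducible u ∧ a = Associates.mk u)
        ∧ z.prod = Associates.mk g ∧ Multiset.card z = k}

/-! Every divisor of `X ^ c` in `K[H]` is a monomial `X ^ a` with `a ∈ H` up to a nonzero
constant: `X` is prime in `K[X]`, and the units of `K[X]` are constants, which lie in `K[H]`.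
So `a ↦ [X ^ a]` identifies `H` with a divisor-closed submonoid of the monoid of associate
classes of `K[H]`. An identification of that kind matches the atoms of `H` with irreducible
classes, and hence the factorizations of `c` with those of `X ^ c`, length by length. -/

open Polynomial

structure IsDivisorClosedEmbedding {M : Type*} [CommMonoid M] (H : AddSubmonoid ℕ)
    (e : ℕ → M) : Prop where
  map_zero : e 0 = 1
  map_add : ∀ a ∈ H, ∀ b ∈ H, e (a + b) = e a * e b
  injOn : Set.InjOn e H
  exists_eq_of_dvd : ∀ c ∈ H, ∀ x, x ∣ e c → ∃ a ∈ H, e a = x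

namespace IsDivisorClosedEmbedding

variable {M : Type*} [CommMonoid M] {H : AddSubmonoid ℕ} {e : ℕ → M}
  (he : IsDivisorClosedEmbedding H e)
include he

theorem map_multiset_sum {z : Multiset ℕ} (hz : ∀ a ∈ z, a ∈ H) :
    (z.map e).prod = e z.sum := by
  induction z using Multiset.induction with
  | empty => simp [he.map_zero]
  | cons a z ih =>
    rw [Multiset.map_cons, Multiset.prod_cons, Multiset.sum_cons,
      he.map_add a (hz a (Multiset.mem_cons_self a z)) _
        (H.multiset_sum_mem z fun b hb => hz b (Multiset.mem_cons_of_mem hb)),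
      ih fun b hb => hz b (Multiset.mem_cons_of_mem hb)]

theorem isUnit_iff {a : ℕ} (ha : a ∈ H) : IsUnit (e a) ↔ a = 0 := by
  refine ⟨fun hunit => ?_, fun h => h ▸ he.map_zero ▸ isUnit_one⟩
  obtain ⟨y, hy⟩ := isUnit_iff_exists_inv.mp hunit
  obtain ⟨b, hb, rfl⟩ := he.exists_eq_of_dvd 0 H.zero_mem y
    (he.map_zero ▸ Dvd.intro_left _ hy)
  have : a + b = 0 :=
    he.injOn (H.add_mem ha hb) H.zero_mem (by rw [he.map_add a ha b hb, hy, he.map_zero])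
  omega

theorem irreducible_iff {a : ℕ} (ha : a ∈ H) : Irreducible (e a) ↔ IsAtomOfN H a := by
  constructor
  · intro hirr
    refine ⟨ha, fun h0 => hirr.not_isUnit ((he.isUnit_iff ha).mpr h0), ?_⟩
    rintro v hv w hw hv0 hw0 rfl
    rcases hirr.isUnit_or_isUnit (he.map_add v hv w hw) with hunit | hunit
    · exact hv0 ((he.isUnit_iff hv).mp hunit)
    · exact hw0 ((he.isUnit_iff hw).mp hunit)
  · rintro ⟨-, ha0, hatom⟩
    refine ⟨fun hunit => ha0 ((he.isUnit_iff ha).mp hunit), fun x y hxy => ?_⟩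
    obtain ⟨b, hb, rfl⟩ := he.exists_eq_of_dvd a ha x (Dvd.intro y hxy.symm)
    obtain ⟨b', hb', rfl⟩ := he.exists_eq_of_dvd a ha y (Dvd.intro_left _ hxy.symm)
    have hsum : a = b + b' :=
      he.injOn ha (H.add_mem hb hb') (by rw [hxy, he.map_add b hb b' hb'])
    rw [he.isUnit_iff hb, he.isUnit_iff hb']
    by_contra! h
    exact hatom b hb b' hb' h.1 h.2 hsum

theorem map_invFunOn_map {z : Multiset ℕ} (hz : ∀ a ∈ z, a ∈ H) :
    (z.map e).map (Function.invFunOn e H) = z := by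
  rw [Multiset.map_map]
  conv_rhs => rw [← Multiset.map_id z]
  exact Multiset.map_congr rfl fun a ha => he.injOn.leftInvOn_invFunOn (hz a ha)

theorem bijOn_factorizations {c : ℕ} (hc : c ∈ H) (k : ℕ) :
    Set.BijOn (Multiset.map e) {z | IsFactorizationOfN H c z ∧ Multiset.card z = k}
      {w | (∀ x ∈ w, Irreducible x) ∧ w.prod = e c ∧ Multiset.card w = k} := by
  refine ⟨?_, ?_, ?_⟩
  · rintro z ⟨⟨hatoms, rfl⟩, rfl⟩
    refine ⟨?_, he.map_multiset_sum fun a ha => (hatoms a ha).1, Multiset.card_map _ _⟩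
    simp only [Multiset.mem_map]
    rintro _ ⟨a, ha, rfl⟩
    exact (he.irreducible_iff (hatoms a ha).1).mpr (hatoms a ha)
  · rintro z ⟨⟨hz, -⟩, -⟩ z' ⟨⟨hz', -⟩, -⟩ h
    rw [← he.map_invFunOn_map fun a ha => (hz a ha).1,
      ← he.map_invFunOn_map fun a ha => (hz' a ha).1, h]
  · rintro w ⟨hirr, hprod, rfl⟩
    have hrange : ∀ x ∈ w, ∃ a ∈ H, e a = x := fun x hx =>
      he.exists_eq_of_dvd c hc x (hprod ▸ Multiset.dvd_prod hx)
    have hz : ∀ a ∈ w.map (Function.invFunOn e H), a ∈ H := by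
      simp only [Multiset.mem_map]
      rintro _ ⟨x, hx, rfl⟩
      exact Function.invFunOn_mem (hrange x hx)
    have hw : (w.map (Function.invFunOn e H)).map e = w := by
      rw [Multiset.map_map]
      conv_rhs => rw [← Multiset.map_id w]
      exact Multiset.map_congr rfl fun x hx => Function.invFunOn_eq (hrange x hx)
    refine ⟨_, ⟨⟨fun a ha => ?_, ?_⟩, Multiset.card_map _ _⟩, hw⟩
    · refine (he.irreducible_iff (hz a ha)).mp (hirr _ ?_)
      rw [← hw]
      exact Multiset.mem_map_of_mem e ha
    · refine he.injOn (H.multiset_sum_mem _ hz) hc ?_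
      rw [← he.map_multiset_sum hz, hw, hprod]

end IsDivisorClosedEmbedding

namespace semigroupAlgebra

variable {K : Type*} [Field K] {H : AddSubmonoid ℕ}

theorem X_pow_mem {a : ℕ} (ha : a ∈ H) : (X : K[X]) ^ a ∈ semigroupAlgebra K H := by
  intro n hn
  rw [support_X_pow, Finset.mem_singleton] at hn
  exact hn ▸ ha

variable (K H) in
/-- The monomial `X ^ a` of `K[H]`, with the junk value `1` when `a ∉ H`. -/
noncomputable def xPow (a : ℕ) : semigroupAlgebra K H :=
  open scoped Classical in if ha : a ∈ H then ⟨X ^ a, X_pow_mem ha⟩ else 1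

theorem coe_xPow {a : ℕ} (ha : a ∈ H) : (xPow K H a : K[X]) = X ^ a := by
  rw [xPow, dif_pos ha]

theorem associated_coe_iff {u v : semigroupAlgebra K H} :
    Associated (u : K[X]) v ↔ Associated u v := by
  refine ⟨fun ⟨U, hU⟩ => ?_, fun h => h.map (semigroupAlgebra K H).val⟩
  obtain ⟨r, hr, hC⟩ := Polynomial.isUnit_iff.mp U.isUnit
  refine ⟨(hr.map (algebraMap K (semigroupAlgebra K H))).unit, Subtype.ext ?_⟩
  simpa [Polynomial.algebraMap_eq, hC] using hU

theorem mem_of_associated_X_pow {u : semigroupAlgebra K H} {m : ℕ}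
    (h : Associated (X ^ m) (u : K[X])) : m ∈ H := by
  obtain ⟨U, hU⟩ := h
  obtain ⟨r, hr, hC⟩ := Polynomial.isUnit_iff.mp U.isUnit
  refine u.2 m ?_
  simp [← hU, ← hC, hr.ne_zero]

theorem isDivisorClosedEmbedding :
    IsDivisorClosedEmbedding H fun a => Associates.mk (xPow K H a) where
  map_zero := by
    rw [← Associates.mk_one]
    exact congrArg _ (Subtype.ext (by simp [coe_xPow H.zero_mem]))
  map_add a ha b hb := by
    rw [Associates.mk_mul_mk]
    exact congrArg _ (Subtype.ext (by simp [coe_xPow, ha, hb, H.add_mem ha hb, pow_add]))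
  injOn a ha b hb hab := by
    have h := associated_coe_iff.mpr (Associates.mk_eq_mk_iff_associated.mp hab)
    rw [coe_xPow ha, coe_xPow hb] at h
    simpa using degree_eq_degree_of_associated h
  exists_eq_of_dvd c hc x hx := by
    obtain ⟨u, rfl⟩ := Associates.exists_rep x
    have hdvd : (u : K[X]) ∣ X ^ c := by
      simpa [coe_xPow hc] using map_dvd (semigroupAlgebra K H).val (Associates.mk_dvd_mk.mp hx)
    obtain ⟨m, -, hm⟩ := (dvd_prime_pow prime_X c).mp hdvd
    have hmH := mem_of_associated_X_pow hm.symm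
    refine ⟨m, hmH, Associates.mk_eq_mk_iff_associated.mpr (associated_coe_iff.mp ?_)⟩
    rw [coe_xPow hmH]
    exact hm.symm

theorem algFactorizationsOfLength_eq (g : semigroupAlgebra K H) (k : ℕ) :
    AlgFactorizationsOfLength g k =
      {w | (∀ x ∈ w, Irreducible x) ∧ w.prod = Associates.mk g ∧ Multiset.card w = k} := by
  have hirr (x : Associates (semigroupAlgebra K H)) :
      (∃ u, Irreducible u ∧ x = Associates.mk u) ↔ Irreducible x := by
    obtain ⟨u, rfl⟩ := Associates.exists_rep x
    exact ⟨fun ⟨v, hv, hvu⟩ => hvu ▸ Associates.irreducible_mk.mpr hv,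
      fun hu => ⟨u, Associates.irreducible_mk.mp hu, rfl⟩⟩
  simp only [AlgFactorizationsOfLength, hirr]

end semigroupAlgebra

theorem stmt13_general (K : Type*) [Field K] (H : AddSubmonoid ℕ)
    (c : ℕ) (hc : c ∈ H)
    (g : semigroupAlgebra K H) (hg : (g : Polynomial K) = Polynomial.X ^ c) :
    ({k | (AlgFactorizationsOfLength g k).Nonempty}
        = {k | ∃ z : Multiset ℕ, IsFactorizationOfN H c z ∧ Multiset.card z = k}) ∧
    ∀ k : ℕ, (AlgFactorizationsOfLength g k).ncard
        = {z : Multiset ℕ | IsFactorizationOfN H c z ∧ Multiset.card z = k}.ncard := by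
  have hg' : g = semigroupAlgebra.xPow K H c :=
    Subtype.ext (hg.trans (semigroupAlgebra.coe_xPow hc).symm)
  have hbij (k : ℕ) :=
    (semigroupAlgebra.isDivisorClosedEmbedding (K := K)).bijOn_factorizations hc k
  simp only [← hg', ← semigroupAlgebra.algFactorizationsOfLength_eq] at hbij
  refine ⟨Set.ext fun k => ?_, fun k => (hbij k).ncard_eq.symm⟩
  simp only [Set.mem_ofPred_eq, ← (hbij k).image_eq, Set.image_nonempty]
  rfl

/-- Let `K` be a field, `H` a numerical monoid and `c ∈ H`. Then the set
of lengths of the monomial `X^c` in the semigroup algebra `K[H]` equals the set of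
lengths of `c` in `H`, and for every `k` the number of factorizations of `X^c` in
`K[H]` of length `k` (up to associates) equals the number of factorizations of `c` in
`H` of length `k`. -/
theorem stmt13 (K : Type*) [Field K] (H : AddSubmonoid ℕ)
    (hH : ((H : Set ℕ)ᶜ).Finite) (c : ℕ) (hc : c ∈ H)
    (g : semigroupAlgebra K H) (hg : (g : Polynomial K) = Polynomial.X ^ c) :
    ({k | (AlgFactorizationsOfLength g k).Nonempty}
        = {k | ∃ z : Multiset ℕ, IsFactorizationOfN H c z ∧ Multiset.card z = k}) ∧
    ∀ k : ℕ, (AlgFactorizationsOfLength g k).ncard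
        = {z : Multiset ℕ | IsFactorizationOfN H c z ∧ Multiset.card z = k}.ncard :=
  stmt13_general K H c hc g hg
end
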